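/- arXiv:2203.11177 — 7 statements merged into one kernel-verified Lean document; each statement's English description precedes it below -/
import Mathlib

section
/- For every γ > 0, the set K_γ of stabilizing full-order dynamic output-feedback controllers whose closed-loop H∞ norm is strictly less than γ is an open subset of ℝ^{(n_u+n_x)×(n_y+n_x)}. -/
open Matrix

noncomputable section

/-- Operator norm (largest singular value) of a complex matrix. -/
def matOpNorm {m n : ℕ} (M : Matrix (Fin m) (Fin n) ℂ) : ℝ :=
  ‖(Matrix.toEuclideanLin M).toContinuousLinearMap‖

/-- A real square matrix is Hurwitz if all its eigenvalues (over ℂ) have negative real part. -/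
def IsHurwitz {n : Type*} [Fintype n] [DecidableEq n] (M : Matrix n n ℝ) : Prop :=
  ∀ μ ∈ spectrum ℂ (M.map (Complex.ofReal ·)), μ.re < 0

/-- The plant data. -/
structure Plant (nx nu ny nw nz : ℕ) where
  A : Matrix (Fin nx) (Fin nx) ℝ
  B1 : Matrix (Fin nx) (Fin nw) ℝ
  B2 : Matrix (Fin nx) (Fin nu) ℝ
  C1 : Matrix (Fin nz) (Fin nx) ℝ
  C2 : Matrix (Fin ny) (Fin nx) ℝ
  D11 : Matrix (Fin nz) (Fin nw) ℝ
  D12 : Matrix (Fin nz) (Fin nu) ℝ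
  D21 : Matrix (Fin ny) (Fin nw) ℝ

namespace Plant

variable {nx nu ny nw nz : ℕ} (P : Plant nx nu ny nw nz)

/-- Closed-loop `A` matrix. -/
def Acl (K : Matrix (Fin nu ⊕ Fin nx) (Fin ny ⊕ Fin nx) ℝ) :
    Matrix (Fin nx ⊕ Fin nx) (Fin nx ⊕ Fin nx) ℝ :=
  fromBlocks (P.A + P.B2 * K.toBlocks₁₁ * P.C2) (P.B2 * K.toBlocks₁₂)
    (K.toBlocks₂₁ * P.C2) K.toBlocks₂₂

/-- Closed-loop `B` matrix. -/
def Bcl (K : Matrix (Fin nu ⊕ Fin nx) (Fin ny ⊕ Fin nx) ℝ) :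
    Matrix (Fin nx ⊕ Fin nx) (Fin nw) ℝ :=
  fromRows (P.B1 + P.B2 * K.toBlocks₁₁ * P.D21) (K.toBlocks₂₁ * P.D21)

/-- Closed-loop `C` matrix. -/
def Ccl (K : Matrix (Fin nu ⊕ Fin nx) (Fin ny ⊕ Fin nx) ℝ) :
    Matrix (Fin nz) (Fin nx ⊕ Fin nx) ℝ :=
  fromCols (P.C1 + P.D12 * K.toBlocks₁₁ * P.C2) (P.D12 * K.toBlocks₁₂)

/-- Closed-loop `D` matrix. -/
def Dcl (K : Matrix (Fin nu ⊕ Fin nx) (Fin ny ⊕ Fin nx) ℝ) :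
    Matrix (Fin nz) (Fin nw) ℝ :=
  P.D11 + P.D12 * K.toBlocks₁₁ * P.D21

/-- The set of stabilizing full-order dynamic output feedback controllers. -/
def Cstab : Set (Matrix (Fin nu ⊕ Fin nx) (Fin ny ⊕ Fin nx) ℝ) :=
  {K | IsHurwitz (P.Acl K)}

/-- Closed-loop transfer matrix at frequency `s = iω`. -/
def transferAt (K : Matrix (Fin nu ⊕ Fin nx) (Fin ny ⊕ Fin nx) ℝ) (ω : ℝ) :
    Matrix (Fin nz) (Fin nw) ℂ :=
  (P.Ccl K).map (Complex.ofReal ·) *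
    (((Complex.I * (ω : ℂ)) • (1 : Matrix (Fin nx ⊕ Fin nx) (Fin nx ⊕ Fin nx) ℂ)
        - (P.Acl K).map (Complex.ofReal ·))⁻¹) *
    (P.Bcl K).map (Complex.ofReal ·) + (P.Dcl K).map (Complex.ofReal ·)

/-- Closed-loop H∞ norm. -/
def hinfNorm (K : Matrix (Fin nu ⊕ Fin nx) (Fin ny ⊕ Fin nx) ℝ) : ℝ :=
  ⨆ ω : ℝ, matOpNorm (P.transferAt K ω)

/-- The feasible set `K_γ`. -/
def Kset (γ : ℝ) : Set (Matrix (Fin nu ⊕ Fin nx) (Fin ny ⊕ Fin nx) ℝ) :=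
  {K | K ∈ P.Cstab ∧ P.hinfNorm K < γ}

end Plant

/-- The similarity transformation `𝒯_T` on full-order controllers. -/
def simT {nx nu ny : ℕ} (T : Matrix (Fin nx) (Fin nx) ℝ)
    (K : Matrix (Fin nu ⊕ Fin nx) (Fin ny ⊕ Fin nx) ℝ) :
    Matrix (Fin nu ⊕ Fin nx) (Fin ny ⊕ Fin nx) ℝ :=
  fromBlocks K.toBlocks₁₁ (K.toBlocks₁₂ * T⁻¹) (T * K.toBlocks₂₁) (T * K.toBlocks₂₂ * T⁻¹)

/-!
The stabilizing controllers form an open set: near `M₀` every eigenvalue of `M` lies in the disc of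
radius `‖M₀‖ + 1`, and on the compact part of the closed right half-plane inside it `zI - M` stays
invertible by continuity and the tube lemma.

For the H∞ bound, the transfer matrix `T(K, ω) = C (iωI - A)⁻¹ B + D` is jointly continuous wherever
`iω` is not an eigenvalue, and the identity `s (sI - A)⁻¹ = I + A (sI - A)⁻¹` gives
`‖(sI - A)⁻¹‖ ≤ 1 / (|s| - ‖A‖)`, so `T(K, ω) → D(K₀)` as `K → K₀` and `|ω| → ∞`. Hence
`‖D(K₀)‖ ≤ ‖T(K₀)‖_∞ < γ` controls all large frequencies uniformly near `K₀`, and the tube lemma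
handles the remaining compact interval of frequencies.
-/

open Filter Topology Bornology Set
open scoped Matrix.Norms.L2Operator

section MatrixContinuity

variable {X R l m n p : Type*} [TopologicalSpace X] [TopologicalSpace R]

@[fun_prop]
theorem Continuous.matrix_toBlocks₁₁ {A : X → Matrix (n ⊕ p) (l ⊕ m) R} (hA : Continuous A) :
    Continuous fun x => (A x).toBlocks₁₁ :=
  hA.matrix_submatrix Sum.inl Sum.inl

@[fun_prop]
theorem Continuous.matrix_toBlocks₁₂ {A : X → Matrix (n ⊕ p) (l ⊕ m) R} (hA : Continuous A) :
    Continuous fun x => (A x).toBlocks₁₂ :=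
  hA.matrix_submatrix Sum.inl Sum.inr

@[fun_prop]
theorem Continuous.matrix_toBlocks₂₁ {A : X → Matrix (n ⊕ p) (l ⊕ m) R} (hA : Continuous A) :
    Continuous fun x => (A x).toBlocks₂₁ :=
  hA.matrix_submatrix Sum.inr Sum.inl

@[fun_prop]
theorem Continuous.matrix_toBlocks₂₂ {A : X → Matrix (n ⊕ p) (l ⊕ m) R} (hA : Continuous A) :
    Continuous fun x => (A x).toBlocks₂₂ :=
  hA.matrix_submatrix Sum.inr Sum.inr

@[fun_prop]
theorem Continuous.matrix_fromRows {A : X → Matrix n l R} {B : X → Matrix p l R}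
    (hA : Continuous A) (hB : Continuous B) : Continuous fun x => fromRows (A x) (B x) :=
  continuous_matrix <| by rintro (i | i) j <;> refine Continuous.matrix_elem ?_ i j <;> assumption

@[fun_prop]
theorem Continuous.matrix_fromCols {A : X → Matrix n l R} {B : X → Matrix n m R}
    (hA : Continuous A) (hB : Continuous B) : Continuous fun x => fromCols (A x) (B x) :=
  continuous_matrix <| by rintro i (j | j) <;> refine Continuous.matrix_elem ?_ i j <;> assumption

theorem Filter.Tendsto.matrix_mul [Fintype n] [Mul R] [AddCommMonoid R] [ContinuousAdd R]
    [ContinuousMul R] {α : Type*} {F : Filter α} {A : α → Matrix m n R} {B : α → Matrix n p R}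
    {A₀ : Matrix m n R} {B₀ : Matrix n p R} (hA : Tendsto A F (𝓝 A₀)) (hB : Tendsto B F (𝓝 B₀)) :
    Tendsto (fun x => A x * B x) F (𝓝 (A₀ * B₀)) :=
  ((continuous_fst.matrix_mul continuous_snd).tendsto (A₀, B₀)).comp (hA.prodMk_nhds hB)

end MatrixContinuity

section Cocompact

variable {X Y α : Type*} [TopologicalSpace X] [TopologicalSpace Y]

theorem eventually_forall_of_forall_nhds_of_cocompact {x₀ : X} {P : X → Y → Prop}
    (hnear : ∀ y, ∀ᶠ p : X × Y in 𝓝 (x₀, y), P p.1 p.2)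
    (hfar : ∀ᶠ p : X × Y in 𝓝 x₀ ×ˢ cocompact Y, P p.1 p.2) :
    ∀ᶠ x in 𝓝 x₀, ∀ y, P x y := by
  obtain ⟨U, hU, V, hV, hUV⟩ := eventually_prod_iff.1 hfar
  obtain ⟨t, ht, htV⟩ := mem_cocompact.1 hV
  filter_upwards [hU, ht.eventually_forall_of_forall_eventually fun y _ => hnear y]
    with x hxU hxt y
  by_cases hy : y ∈ t
  exacts [hxt y hy, hUV hxU (htV hy)]

variable [ConditionallyCompleteLinearOrder α] [TopologicalSpace α] [OrderTopology α]

theorem Continuous.bddAbove_range_of_tendsto_cocompact [NoMaxOrder α] {f : Y → α} {l : α}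
    (hf : Continuous f) (hl : Tendsto f (cocompact Y) (𝓝 l)) : BddAbove (range f) := by
  obtain ⟨u, hu⟩ := exists_gt l
  obtain ⟨t, ht, htf⟩ := mem_cocompact.1 (hl (Iio_mem_nhds hu))
  refine ((ht.bddAbove_image hf.continuousOn).union (bddAbove_Iio (a := u))).mono ?_
  rintro _ ⟨y, rfl⟩
  by_cases hy : y ∈ t
  exacts [Or.inl (mem_image_of_mem f hy), Or.inr (htf hy)]

theorem eventually_iSup_lt_of_tendsto_cocompact [DenselyOrdered α] [NoMaxOrder α]
    [NoncompactSpace Y] {f : X → Y → α} {x₀ : X} {l c : α}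
    (hf : ∀ y, ContinuousAt (Function.uncurry f) (x₀, y))
    (hl : Tendsto (Function.uncurry f) (𝓝 x₀ ×ˢ cocompact Y) (𝓝 l))
    (hc : ⨆ y, f x₀ y < c) :
    ∀ᶠ x in 𝓝 x₀, ⨆ y, f x y < c := by
  have hl₀ : Tendsto (f x₀) (cocompact Y) (𝓝 l) := hl.comp (tendsto_const_nhds.prodMk tendsto_id)
  have hbdd : BddAbove (range (f x₀)) :=
    Continuous.bddAbove_range_of_tendsto_cocompact
      (continuous_iff_continuousAt.2 fun y => (hf y).comp (Continuous.prodMk_right x₀).continuousAt)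
      hl₀
  obtain ⟨c', hsup, hc'⟩ := exists_between hc
  have hnear : ∀ y, ∀ᶠ p : X × Y in 𝓝 (x₀, y), f p.1 p.2 < c' := fun y =>
    (hf y).eventually (Iio_mem_nhds ((le_ciSup hbdd y).trans_lt hsup))
  have hfar : ∀ᶠ p : X × Y in 𝓝 x₀ ×ˢ cocompact Y, f p.1 p.2 < c' :=
    hl (Iio_mem_nhds ((le_of_tendsto hl₀ (.of_forall (le_ciSup hbdd))).trans_lt hsup))
  have : Nonempty Y := (cocompact Y).nonempty_of_neBot
  filter_upwards [eventually_forall_of_forall_nhds_of_cocompact (P := fun x y => f x y < c')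
    hnear hfar] with x hx
  exact (ciSup_le fun y => (hx y).le).trans_lt hc'

end Cocompact

theorem tendsto_norm_snd_sub_nhds_prod_cobounded {X E : Type*} [TopologicalSpace X]
    [SeminormedAddGroup E] {g : X → ℝ} {x₀ : X} {c : ℝ} (hg : Tendsto g (𝓝 x₀) (𝓝 c)) :
    Tendsto (fun p : X × E => ‖p.2‖ - g p.1) (𝓝 x₀ ×ˢ cobounded E) atTop :=
  ((tendsto_norm_cobounded_atTop.comp tendsto_snd).atTop_add (hg.comp tendsto_fst).neg).congr
    fun _ => (sub_eq_add_neg _ _).symm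

section Resolvent

variable {𝕜 A X : Type*} [NontriviallyNormedField 𝕜] [NormedRing A] [NormedAlgebra 𝕜 A]
  [CompleteSpace A] [TopologicalSpace X]

namespace spectrum

theorem norm_resolvent_le_of_norm_mul_lt {a : A} {k : 𝕜} (h : ‖a‖ * ‖(1 : A)‖ < ‖k‖) :
    ‖resolvent a k‖ ≤ ‖(1 : A)‖ / (‖k‖ - ‖a‖ * ‖(1 : A)‖) := by
  have hr : k • resolvent a k - a * resolvent a k = 1 := by
    have := Ring.mul_inverse_cancel _ (mem_resolventSet_of_norm_lt_mul h)
    rw [sub_mul, ← Algebra.smul_def] at this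
    exact this
  set r := resolvent a k
  -- writing `a * r` as `a * 1 * r` avoids assuming `‖1‖ = 1`
  have : ‖k‖ * ‖r‖ ≤ ‖(1 : A)‖ + ‖a‖ * ‖(1 : A)‖ * ‖r‖ :=
    calc ‖k‖ * ‖r‖ = ‖1 + a * 1 * r‖ := by rw [← norm_smul, mul_one, ← hr, sub_add_cancel]
      _ ≤ ‖(1 : A)‖ + ‖a‖ * ‖(1 : A)‖ * ‖r‖ :=
        (norm_add_le _ _).trans (add_le_add le_rfl (norm_mul₃_le ..))
  rw [le_div_iff₀ (sub_pos.2 h)]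
  linarith

theorem isOpen_setOf_mem_resolventSet : IsOpen {p : A × 𝕜 | p.2 ∈ resolventSet 𝕜 p.1} :=
  Units.isOpen.preimage (by fun_prop)

theorem continuousAt_resolvent {a : A} {k : 𝕜} (hk : k ∈ resolventSet 𝕜 a) :
    ContinuousAt (fun p : A × 𝕜 => resolvent p.1 p.2) (a, k) := by
  have hu : IsUnit (algebraMap 𝕜 A k - a) := hk
  have h := NormedRing.inverse_continuousAt hu.unit
  rw [IsUnit.unit_spec] at h
  exact h.comp (f := fun p : A × 𝕜 => algebraMap 𝕜 A p.2 - p.1) (by fun_prop)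

theorem eventually_mem_resolventSet_nhds_prod_cobounded {a : X → A} {x₀ : X}
    (ha : ContinuousAt a x₀) :
    ∀ᶠ p : X × 𝕜 in 𝓝 x₀ ×ˢ cobounded 𝕜, p.2 ∈ resolventSet 𝕜 (a p.1) :=
  ((tendsto_norm_snd_sub_nhds_prod_cobounded (ha.norm.mul_const _)).eventually_gt_atTop 0).mono
    fun _ hp => mem_resolventSet_of_norm_lt_mul (sub_pos.1 hp)

theorem tendsto_resolvent_nhds_prod_cobounded {a : X → A} {x₀ : X} (ha : ContinuousAt a x₀) :
    Tendsto (fun p : X × 𝕜 => resolvent (a p.1) p.2) (𝓝 x₀ ×ˢ cobounded 𝕜) (𝓝 0) := by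
  have hgap := tendsto_norm_snd_sub_nhds_prod_cobounded (E := 𝕜) (ha.norm.mul_const ‖(1 : A)‖)
  refine squeeze_zero_norm' ?_ ((tendsto_const_nhds (x := ‖(1 : A)‖)).div_atTop hgap)
  filter_upwards [hgap.eventually_gt_atTop 0] with p hp
  exact norm_resolvent_le_of_norm_mul_lt (sub_pos.1 hp)

end spectrum

end Resolvent

section TransferMatrix

variable {𝕜 X m n p : Type*} [Fintype n] [DecidableEq n]

def transferMatrix [CommRing 𝕜] (A : Matrix n n 𝕜) (B : Matrix n p 𝕜) (C : Matrix m n 𝕜)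
    (D : Matrix m p 𝕜) (s : 𝕜) : Matrix m p 𝕜 :=
  C * (s • 1 - A)⁻¹ * B + D

theorem Matrix.inv_smul_one_sub_eq_resolvent [CommRing 𝕜] (A : Matrix n n 𝕜) (s : 𝕜) :
    (s • 1 - A)⁻¹ = resolvent A s := by
  rw [nonsing_inv_eq_ringInverse, resolvent, Algebra.algebraMap_eq_smul_one]

variable [RCLike 𝕜] [TopologicalSpace X] {A : X → Matrix n n 𝕜} {B : X → Matrix n p 𝕜}
  {C : X → Matrix m n 𝕜} {D : X → Matrix m p 𝕜} {x₀ : X}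

theorem continuousAt_transferMatrix (hA : ContinuousAt A x₀) (hB : ContinuousAt B x₀)
    (hC : ContinuousAt C x₀) (hD : ContinuousAt D x₀) {s : 𝕜}
    (hs : s ∈ resolventSet 𝕜 (A x₀)) :
    ContinuousAt (fun q : X × 𝕜 => transferMatrix (A q.1) (B q.1) (C q.1) (D q.1) q.2) (x₀, s) := by
  have hR : ContinuousAt (fun q : X × 𝕜 => resolvent (A q.1) q.2) (x₀, s) :=
    (spectrum.continuousAt_resolvent hs).comp' (f := fun q : X × 𝕜 => (A q.1, q.2))
      (hA.fst'.prodMk continuousAt_snd)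
  simp only [transferMatrix, Matrix.inv_smul_one_sub_eq_resolvent]
  exact ((hC.fst'.matrix_mul hR).matrix_mul hB.fst').add hD.fst'

theorem tendsto_transferMatrix_nhds_prod_cobounded (hA : ContinuousAt A x₀)
    (hB : ContinuousAt B x₀) (hC : ContinuousAt C x₀) (hD : ContinuousAt D x₀) :
    Tendsto (fun q : X × 𝕜 => transferMatrix (A q.1) (B q.1) (C q.1) (D q.1) q.2)
      (𝓝 x₀ ×ˢ cobounded 𝕜) (𝓝 (D x₀)) := by
  have hR := spectrum.tendsto_resolvent_nhds_prod_cobounded (𝕜 := 𝕜) hA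
  simpa [transferMatrix, Matrix.inv_smul_one_sub_eq_resolvent] using
    (((Tendsto.comp hC tendsto_fst).matrix_mul hR).matrix_mul (Tendsto.comp hB tendsto_fst)).add
      (Tendsto.comp hD tendsto_fst)

end TransferMatrix

theorem isOpen_setOf_isHurwitz {n : Type*} [Fintype n] [DecidableEq n] :
    IsOpen {M : Matrix n n ℝ | IsHurwitz M} := by
  refine isOpen_iff_mem_nhds.2 fun M₀ hM₀ => ?_
  have hmap : Continuous fun M : Matrix n n ℝ => M.map (Complex.ofReal ·) := by fun_prop
  let S : Set (Matrix n n ℝ × ℂ) :=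
    {q | q.2.re < 0} ∪ {q | q.2 ∈ resolventSet ℂ (q.1.map (Complex.ofReal ·))}
  have hS : IsOpen S :=
    (isOpen_lt (by fun_prop) continuous_const).union
      (spectrum.isOpen_setOf_mem_resolventSet.preimage
        (f := fun q : Matrix n n ℝ × ℂ => (q.1.map (Complex.ofReal ·), q.2)) (by fun_prop))
  have hnear : ∀ z : ℂ, ∀ᶠ q in 𝓝 (M₀, z), q ∈ S := fun z =>
    hS.mem_nhds (or_iff_not_imp_right.2 (hM₀ z))
  have hfar : ∀ᶠ q in 𝓝 M₀ ×ˢ cocompact ℂ, q ∈ S := by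
    rw [← Metric.cobounded_eq_cocompact]
    exact (spectrum.eventually_mem_resolventSet_nhds_prod_cobounded hmap.continuousAt).mono
      fun _ => Or.inr
  filter_upwards [eventually_forall_of_forall_nhds_of_cocompact (P := fun M z => (M, z) ∈ S)
    hnear hfar] with M hM μ hμ
  exact (hM μ).resolve_right hμ

namespace Plant

variable {nx nu ny nw nz : ℕ} (P : Plant nx nu ny nw nz)

@[fun_prop]
theorem continuous_Acl : Continuous P.Acl := by unfold Acl; fun_prop

@[fun_prop]
theorem continuous_Bcl : Continuous P.Bcl := by unfold Bcl; fun_prop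

@[fun_prop]
theorem continuous_Ccl : Continuous P.Ccl := by unfold Ccl; fun_prop

@[fun_prop]
theorem continuous_Dcl : Continuous P.Dcl := by unfold Dcl; fun_prop

theorem isOpen_Cstab : IsOpen P.Cstab :=
  isOpen_setOf_isHurwitz.preimage P.continuous_Acl

theorem continuousAt_matOpNorm_transferAt {K : Matrix (Fin nu ⊕ Fin nx) (Fin ny ⊕ Fin nx) ℝ}
    (hK : K ∈ P.Cstab) (ω : ℝ) :
    ContinuousAt (fun q : _ × ℝ => matOpNorm (P.transferAt q.1 q.2)) (K, ω) := by
  have hs : Complex.I * ω ∈ resolventSet ℂ ((P.Acl K).map (Complex.ofReal ·)) := by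
    by_contra h
    simpa using hK _ h
  have hT := continuousAt_transferMatrix (x₀ := K)
    (by fun_prop : Continuous fun K => (P.Acl K).map (Complex.ofReal ·)).continuousAt
    (by fun_prop : Continuous fun K => (P.Bcl K).map (Complex.ofReal ·)).continuousAt
    (by fun_prop : Continuous fun K => (P.Ccl K).map (Complex.ofReal ·)).continuousAt
    (by fun_prop : Continuous fun K => (P.Dcl K).map (Complex.ofReal ·)).continuousAt hs
  show ContinuousAt (fun q : _ × ℝ => ‖P.transferAt q.1 q.2‖) (K, ω)
  exact continuous_norm.continuousAt.comp'
    (hT.comp' (f := fun q : Matrix (Fin nu ⊕ Fin nx) (Fin ny ⊕ Fin nx) ℝ × ℝ =>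
      (q.1, Complex.I * q.2)) (x := (K, ω)) (by fun_prop))

theorem tendsto_matOpNorm_transferAt_cocompact (K : Matrix (Fin nu ⊕ Fin nx) (Fin ny ⊕ Fin nx) ℝ) :
    Tendsto (fun q : _ × ℝ => matOpNorm (P.transferAt q.1 q.2)) (𝓝 K ×ˢ cocompact ℝ)
      (𝓝 (matOpNorm ((P.Dcl K).map (Complex.ofReal ·)))) := by
  have hI : Tendsto (fun ω : ℝ => Complex.I * ω) (cocompact ℝ) (cobounded ℂ) := by
    rw [← tendsto_norm_atTop_iff_cobounded]
    simpa only [Function.comp_def, norm_mul, Complex.norm_I, one_mul, Complex.norm_real] using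
      tendsto_norm_cocompact_atTop (E := ℝ)
  have hT := tendsto_transferMatrix_nhds_prod_cobounded (x₀ := K)
    (by fun_prop : Continuous fun K => (P.Acl K).map (Complex.ofReal ·)).continuousAt
    (by fun_prop : Continuous fun K => (P.Bcl K).map (Complex.ofReal ·)).continuousAt
    (by fun_prop : Continuous fun K => (P.Ccl K).map (Complex.ofReal ·)).continuousAt
    (by fun_prop : Continuous fun K => (P.Dcl K).map (Complex.ofReal ·)).continuousAt
  have hnorm := (continuous_norm.tendsto _).comp (hT.comp (tendsto_id.prodMap hI))
  exact hnorm

end Plant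

theorem Kset_isOpen_general {nx nu ny nw nz : ℕ} (P : Plant nx nu ny nw nz) :
    ∀ γ : ℝ, 0 < γ → IsOpen (P.Kset γ) := by
  intro γ _
  refine isOpen_iff_mem_nhds.2 fun K ⟨hK, hγ⟩ => ?_
  filter_upwards [P.isOpen_Cstab.mem_nhds hK,
    eventually_iSup_lt_of_tendsto_cocompact (f := fun K ω => matOpNorm (P.transferAt K ω))
      (P.continuousAt_matOpNorm_transferAt hK)
      (P.tendsto_matOpNorm_transferAt_cocompact K) hγ] with K' hK' hγ'
  exact ⟨hK', hγ'⟩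

/-- For every `γ > 0`, the set `K_γ` of stabilizing full-order dynamic
output-feedback controllers whose closed-loop H∞ norm is strictly less than `γ` is an open
subset of `ℝ^{(n_u+n_x)×(n_y+n_x)}`. -/
theorem Kset_isOpen {nx nu ny nw nz : ℕ} (hnx : 0 < nx) (hnu : 0 < nu) (hny : 0 < ny)
    (hnw : 0 < nw) (hnz : 0 < nz) (P : Plant nx nu ny nw nz) :
    ∀ γ : ℝ, 0 < γ → IsOpen (P.Kset γ) :=
  Kset_isOpen_general P
end
end

section
/- Let γ > 0 and suppose n_x ≥ 1 and K_γ is nonempty. Then K_γ is unbounded: for every r > 0 there exists K ∈ K_γ with ‖K‖ > r (Frobenius norm). -/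
/-!
Changing the controller state coordinates by an invertible `T` (the map `simT T`) conjugates the
closed loop by `diag(I, T)`, which preserves both stability and the transfer matrix. For
`T = c • 1` this multiplies `B_K` by `c`, so the feasible set is unbounded as soon as some feasible
controller has `B_K ≠ 0`. If `B_K = 0` the controller state is never excited: the closed loop is
block upper triangular, its spectrum is that of `A + B₂ D_K C₂` together with that of `A_K`, and its
transfer matrix does not involve `A_K`, so `A_K` can be replaced by `-c • 1` for any `c > 0`.
-/

open Matrix

noncomputable section

/-- Frobenius norm of a real matrix. -/
def frobNorm {m n : Type*} [Fintype m] [Fintype n] (M : Matrix m n ℝ) : ℝ :=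
  Real.sqrt (∑ i, ∑ j, (M i j) ^ 2)

lemma abs_le_frobNorm {m n : Type*} [Fintype m] [Fintype n] (M : Matrix m n ℝ) (i : m) (j : n) :
    |M i j| ≤ frobNorm M := by
  refine Real.abs_le_sqrt ?_
  calc M i j ^ 2 ≤ ∑ j', M i j' ^ 2 :=
        Finset.single_le_sum (fun _ _ => sq_nonneg _) (Finset.mem_univ j)
    _ ≤ ∑ i', ∑ j', M i' j' ^ 2 :=
        Finset.single_le_sum (f := fun i' => ∑ j', M i' j' ^ 2)
          (fun _ _ => Finset.sum_nonneg fun _ _ => sq_nonneg _) (Finset.mem_univ i)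

lemma Matrix.spectrum_fromBlocks_zero₂₁ {R m n : Type*} [CommRing R] [Fintype m] [Fintype n]
    [DecidableEq m] [DecidableEq n] (A : Matrix m m R) (B : Matrix m n R) (D : Matrix n n R) :
    spectrum R (fromBlocks A B 0 D) = spectrum R A ∪ spectrum R D := by
  ext μ
  have hsub : algebraMap R _ μ - fromBlocks A B 0 D =
      fromBlocks (algebraMap R _ μ - A) (-B) 0 (algebraMap R _ μ - D) := by
    simp only [Algebra.algebraMap_eq_smul_one, ← fromBlocks_one, fromBlocks_smul, smul_zero,
      sub_eq_add_neg, fromBlocks_neg, fromBlocks_add, neg_zero, add_zero, zero_add]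
  simp only [Set.mem_union, spectrum.mem_iff, hsub, isUnit_fromBlocks_zero₂₁, not_and_or]

lemma Matrix.map_ofReal_mul {l m n : Type*} [Fintype m] (M : Matrix l m ℝ) (N : Matrix m n ℝ) :
    (M * N).map (Complex.ofReal ·) = M.map (Complex.ofReal ·) * N.map (Complex.ofReal ·) :=
  Matrix.map_mul (f := Complex.ofRealHom)

lemma Matrix.map_ofReal_nonsing_inv {n : Type*} [Fintype n] [DecidableEq n] {S : Matrix n n ℝ}
    (hS : IsUnit S) : S⁻¹.map (Complex.ofReal ·) = (S.map (Complex.ofReal ·))⁻¹ := by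
  refine (inv_eq_left_inv ?_).symm
  have h := congrArg Complex.ofRealHom.mapMatrix
    (nonsing_inv_mul S ((isUnit_iff_isUnit_det S).mp hS))
  rwa [map_mul, map_one] at h

section Hurwitz

variable {n : Type*} [Fintype n] [DecidableEq n]

lemma isHurwitz_conj_iff {S : Matrix n n ℝ} (hS : IsUnit S) (A : Matrix n n ℝ) :
    IsHurwitz (S * A * S⁻¹) ↔ IsHurwitz A := by
  let u : (Matrix n n ℂ)ˣ := (hS.map Complex.ofRealHom.mapMatrix).unit
  have hu : (S * A * S⁻¹).map (Complex.ofReal ·) =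
      u * A.map (Complex.ofReal ·) * (↑u⁻¹ : Matrix n n ℂ) := by
    rw [map_ofReal_mul, map_ofReal_mul, map_ofReal_nonsing_inv hS, coe_units_inv]; rfl
  simp only [IsHurwitz, hu, spectrum.units_conjugate]

lemma isHurwitz_fromBlocks_zero₂₁_iff {m : Type*} [Fintype m] [DecidableEq m]
    (A : Matrix m m ℝ) (B : Matrix m n ℝ) (D : Matrix n n ℝ) :
    IsHurwitz (fromBlocks A B 0 D) ↔ IsHurwitz A ∧ IsHurwitz D := by
  simp only [IsHurwitz, fromBlocks_map, Matrix.map_zero _ Complex.ofReal_zero,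
    spectrum_fromBlocks_zero₂₁, Set.mem_union, or_imp, forall_and]

lemma isHurwitz_neg_smul_one {c : ℝ} (hc : 0 < c) : IsHurwitz ((-c) • (1 : Matrix n n ℝ)) := by
  intro μ hμ
  have hscalar : ((-c) • (1 : Matrix n n ℝ)).map (Complex.ofReal ·) = algebraMap ℂ _ (-c : ℂ) := by
    ext i j
    by_cases h : i = j <;> simp [one_apply, algebraMap_matrix_apply, h]
  have hμc : μ + c = 0 := by
    by_contra hne
    refine hμ ?_
    rw [hscalar, spectrum.mem_resolventSet_iff, ← map_sub, sub_neg_eq_add]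
    exact (Ne.isUnit hne).map _
  have := congrArg Complex.re hμc
  simp only [Complex.add_re, Complex.ofReal_re, Complex.zero_re] at this
  linarith

lemma IsHurwitz.isUnit_I_mul_smul_one_sub {A : Matrix n n ℝ} (hA : IsHurwitz A) (ω : ℝ) :
    IsUnit ((Complex.I * ω) • 1 - A.map (Complex.ofReal ·)) := by
  rw [← Algebra.algebraMap_eq_smul_one, ← spectrum.notMem_iff]
  exact fun h => by simpa using hA _ h

end Hurwitz

section StateSpace

variable {n m p : Type*} [Fintype n] [DecidableEq n]

def stateSpaceTransfer (A : Matrix n n ℝ) (B : Matrix n m ℝ) (C : Matrix p n ℝ)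
    (D : Matrix p m ℝ) (s : ℂ) : Matrix p m ℂ :=
  C.map (Complex.ofReal ·) * (s • 1 - A.map (Complex.ofReal ·))⁻¹ * B.map (Complex.ofReal ·) +
    D.map (Complex.ofReal ·)

lemma stateSpaceTransfer_conj {S : Matrix n n ℝ} (hS : IsUnit S) (A : Matrix n n ℝ)
    (B : Matrix n m ℝ) (C : Matrix p n ℝ) (D : Matrix p m ℝ) (s : ℂ) :
    stateSpaceTransfer (S * A * S⁻¹) (S * B) (C * S⁻¹) D s = stateSpaceTransfer A B C D s := by
  have hS' : IsUnit (S.map (Complex.ofReal ·)).det :=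
    (isUnit_iff_isUnit_det _).mp (hS.map Complex.ofRealHom.mapMatrix)
  have hconj : s • 1 - (S * A * S⁻¹).map (Complex.ofReal ·) = S.map (Complex.ofReal ·) *
      (s • 1 - A.map (Complex.ofReal ·)) * (S.map (Complex.ofReal ·))⁻¹ := by
    rw [map_ofReal_mul, map_ofReal_mul, map_ofReal_nonsing_inv hS, Matrix.mul_sub, Matrix.sub_mul,
      Matrix.mul_smul, Matrix.mul_one, Matrix.smul_mul, mul_nonsing_inv _ hS']
  rw [stateSpaceTransfer, stateSpaceTransfer, hconj, Matrix.mul_inv_rev, Matrix.mul_inv_rev,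
    nonsing_inv_nonsing_inv _ hS', map_ofReal_mul, map_ofReal_mul, map_ofReal_nonsing_inv hS]
  simp only [Matrix.mul_assoc, nonsing_inv_mul_cancel_left _ _ hS']

lemma stateSpaceTransfer_fromBlocks_zero₂₁ {q : Type*} [Fintype q] [DecidableEq q]
    (A₁ : Matrix n n ℝ) (A₂ : Matrix n q ℝ) (A₄ : Matrix q q ℝ) (B : Matrix n m ℝ)
    (C₁ : Matrix p n ℝ) (C₂ : Matrix p q ℝ) (D : Matrix p m ℝ) (s : ℂ)
    (h : IsUnit (s • 1 - A₁.map (Complex.ofReal ·)) ↔ IsUnit (s • 1 - A₄.map (Complex.ofReal ·))) :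
    stateSpaceTransfer (fromBlocks A₁ A₂ 0 A₄) (fromRows B 0) (fromCols C₁ C₂) D s =
      stateSpaceTransfer A₁ B C₁ D s := by
  have hsub : s • 1 - (fromBlocks A₁ A₂ 0 A₄).map (Complex.ofReal ·) =
      fromBlocks (s • 1 - A₁.map (Complex.ofReal ·)) (-A₂.map (Complex.ofReal ·)) 0
        (s • 1 - A₄.map (Complex.ofReal ·)) := by
    simp only [fromBlocks_map, ← fromBlocks_one, fromBlocks_smul, smul_zero,
      sub_eq_add_neg, fromBlocks_neg, fromBlocks_add, neg_zero, add_zero, zero_add,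
      Matrix.map_zero _ Complex.ofReal_zero]
  simp only [stateSpaceTransfer, hsub, inv_fromBlocks_zero₂₁_of_isUnit_iff _ _ _ h, fromRows_map,
    fromCols_map, Matrix.map_zero _ Complex.ofReal_zero, fromCols_mul_fromBlocks,
    fromCols_mul_fromRows, Matrix.mul_zero, add_zero]

end StateSpace

lemma Matrix.inv_fromBlocks_one_zero_zero {α m n : Type*} [CommRing α] [Fintype m] [Fintype n]
    [DecidableEq m] [DecidableEq n] {T : Matrix n n α} (hT : IsUnit T) :
    (fromBlocks (1 : Matrix m m α) 0 0 T)⁻¹ = fromBlocks 1 0 0 T⁻¹ := by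
  simp [inv_fromBlocks_zero₂₁_of_isUnit_iff _ _ _ (iff_of_true isUnit_one hT)]

namespace Plant

variable {nx nu ny nw nz : ℕ} (P : Plant nx nu ny nw nz)
  {K : Matrix (Fin nu ⊕ Fin nx) (Fin ny ⊕ Fin nx) ℝ}

lemma transferAt_eq_stateSpaceTransfer (ω : ℝ) :
    P.transferAt K ω = stateSpaceTransfer (P.Acl K) (P.Bcl K) (P.Ccl K) (P.Dcl K) (Complex.I * ω) :=
  rfl

lemma mem_Kset_of_transferAt_eq {γ : ℝ} {K' : Matrix (Fin nu ⊕ Fin nx) (Fin ny ⊕ Fin nx) ℝ}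
    (hK : K ∈ P.Kset γ) (hK' : K' ∈ P.Cstab) (h : ∀ ω, P.transferAt K' ω = P.transferAt K ω) :
    K' ∈ P.Kset γ :=
  ⟨hK', by simpa only [hinfNorm, h] using hK.2⟩

section Similarity

variable {T : Matrix (Fin nx) (Fin nx) ℝ}

lemma Acl_simT (hT : IsUnit T) :
    P.Acl (simT T K) = fromBlocks (1 : Matrix (Fin nx) (Fin nx) ℝ) 0 0 T * P.Acl K *
      (fromBlocks (1 : Matrix (Fin nx) (Fin nx) ℝ) 0 0 T)⁻¹ := by
  simp [Acl, simT, inv_fromBlocks_one_zero_zero hT, fromBlocks_multiply, Matrix.mul_assoc]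

lemma Bcl_simT :
    P.Bcl (simT T K) = fromBlocks (1 : Matrix (Fin nx) (Fin nx) ℝ) 0 0 T * P.Bcl K := by
  simp [Bcl, simT, fromBlocks_mul_fromRows, Matrix.mul_assoc]

lemma Ccl_simT (hT : IsUnit T) :
    P.Ccl (simT T K) = P.Ccl K * (fromBlocks (1 : Matrix (Fin nx) (Fin nx) ℝ) 0 0 T)⁻¹ := by
  simp [Ccl, simT, inv_fromBlocks_one_zero_zero hT, fromCols_mul_fromBlocks, Matrix.mul_assoc]

lemma Dcl_simT : P.Dcl (simT T K) = P.Dcl K := by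
  simp [Dcl, simT]

lemma simT_mem_Kset (hT : IsUnit T) {γ : ℝ} (hK : K ∈ P.Kset γ) : simT T K ∈ P.Kset γ := by
  have hS : IsUnit (fromBlocks (1 : Matrix (Fin nx) (Fin nx) ℝ) 0 0 T) :=
    isUnit_fromBlocks_zero₂₁.mpr ⟨isUnit_one, hT⟩
  have hstab : simT T K ∈ P.Cstab := by
    change IsHurwitz _
    rw [P.Acl_simT hT, isHurwitz_conj_iff hS]
    exact hK.1
  refine P.mem_Kset_of_transferAt_eq hK hstab fun ω => ?_
  rw [transferAt_eq_stateSpaceTransfer, P.Acl_simT hT, P.Bcl_simT, P.Ccl_simT hT, P.Dcl_simT,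
    stateSpaceTransfer_conj hS, transferAt_eq_stateSpaceTransfer]

end Similarity

section ZeroInputMatrix

variable {P}

lemma Acl_of_toBlocks₂₁_eq_zero (h : K.toBlocks₂₁ = 0) :
    P.Acl K = fromBlocks (P.A + P.B2 * K.toBlocks₁₁ * P.C2) (P.B2 * K.toBlocks₁₂) 0
      K.toBlocks₂₂ := by
  rw [Acl, h, Matrix.zero_mul]

lemma Bcl_of_toBlocks₂₁_eq_zero (h : K.toBlocks₂₁ = 0) :
    P.Bcl K = fromRows (P.B1 + P.B2 * K.toBlocks₁₁ * P.D21) 0 := by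
  rw [Bcl, h, Matrix.zero_mul]

lemma mem_Cstab_iff_of_toBlocks₂₁_eq_zero (h : K.toBlocks₂₁ = 0) :
    K ∈ P.Cstab ↔ IsHurwitz (P.A + P.B2 * K.toBlocks₁₁ * P.C2) ∧ IsHurwitz K.toBlocks₂₂ := by
  change IsHurwitz (P.Acl K) ↔ _
  rw [Acl_of_toBlocks₂₁_eq_zero h, isHurwitz_fromBlocks_zero₂₁_iff]

lemma transferAt_of_toBlocks₂₁_eq_zero (hK : K ∈ P.Cstab) (h : K.toBlocks₂₁ = 0) (ω : ℝ) :
    P.transferAt K ω = stateSpaceTransfer (P.A + P.B2 * K.toBlocks₁₁ * P.C2)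
      (P.B1 + P.B2 * K.toBlocks₁₁ * P.D21) (P.C1 + P.D12 * K.toBlocks₁₁ * P.C2) (P.Dcl K)
      (Complex.I * ω) := by
  obtain ⟨hA, hA_K⟩ := (mem_Cstab_iff_of_toBlocks₂₁_eq_zero h).mp hK
  rw [transferAt_eq_stateSpaceTransfer, Acl_of_toBlocks₂₁_eq_zero h,
    Bcl_of_toBlocks₂₁_eq_zero h, Ccl, stateSpaceTransfer_fromBlocks_zero₂₁]
  exact iff_of_true (hA.isUnit_I_mul_smul_one_sub ω) (hA_K.isUnit_I_mul_smul_one_sub ω)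

lemma fromBlocks_mem_Kset_of_toBlocks₂₁_eq_zero {γ : ℝ} (hK : K ∈ P.Kset γ)
    (h : K.toBlocks₂₁ = 0) {A_K : Matrix (Fin nx) (Fin nx) ℝ} (hA_K : IsHurwitz A_K) :
    fromBlocks K.toBlocks₁₁ K.toBlocks₁₂ 0 A_K ∈ P.Kset γ := by
  have h' : (fromBlocks K.toBlocks₁₁ K.toBlocks₁₂ 0 A_K).toBlocks₂₁ = 0 :=
    toBlocks_fromBlocks₂₁ _ _ _ _
  have hstab : fromBlocks K.toBlocks₁₁ K.toBlocks₁₂ 0 A_K ∈ P.Cstab :=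
    (mem_Cstab_iff_of_toBlocks₂₁_eq_zero h').mpr
      ⟨by simpa using ((mem_Cstab_iff_of_toBlocks₂₁_eq_zero h).mp hK.1).1, by simpa using hA_K⟩
  refine P.mem_Kset_of_transferAt_eq hK hstab fun ω => ?_
  rw [transferAt_of_toBlocks₂₁_eq_zero hstab h', transferAt_of_toBlocks₂₁_eq_zero hK.1 h]
  simp [Dcl]

end ZeroInputMatrix

end Plant

theorem Kset_unbounded_general {nx nu ny nw nz : ℕ} (hnx : 1 ≤ nx) (P : Plant nx nu ny nw nz) (γ : ℝ)
    (hne : (P.Kset γ).Nonempty) :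
    ∀ r : ℝ, 0 < r → ∃ K ∈ P.Kset γ, frobNorm K > r := by
  intro r hr
  suffices ∃ K ∈ P.Kset γ, ∃ i j, |K i j| = r + 1 by
    obtain ⟨K, hK, i, j, hij⟩ := this
    exact ⟨K, hK, by linarith [abs_le_frobNorm K i j]⟩
  obtain ⟨K, hK⟩ := hne
  by_cases hB : K.toBlocks₂₁ = 0
  · have hA_K := isHurwitz_neg_smul_one (n := Fin nx) (by linarith : 0 < r + 1)
    refine ⟨_, P.fromBlocks_mem_Kset_of_toBlocks₂₁_eq_zero hK hB hA_K,
      .inr ⟨0, hnx⟩, .inr ⟨0, hnx⟩, ?_⟩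
    rw [fromBlocks_apply₂₂, Matrix.smul_apply, one_apply_eq, smul_eq_mul, mul_one, abs_neg,
      abs_of_pos (by linarith)]
  · obtain ⟨i, j, hij⟩ : ∃ i j, K.toBlocks₂₁ i j ≠ 0 := by
      simpa [← Matrix.ext_iff] using hB
    have hc : 0 < (r + 1) / |K.toBlocks₂₁ i j| := by positivity
    refine ⟨simT (((r + 1) / |K.toBlocks₂₁ i j|) • 1) K,
      P.simT_mem_Kset (isUnit_one.smul (Units.mk0 _ hc.ne')) hK, .inr i, .inl j, ?_⟩
    simp [simT, abs_mul, abs_of_pos hc, div_mul_cancel₀ _ (abs_pos.mpr hij).ne']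

/-- If `n_x ≥ 1` and `K_γ` is nonempty (`γ > 0`), then `K_γ` is unbounded:
for every `r > 0` there is `K ∈ K_γ` with Frobenius norm `‖K‖ > r`. -/
theorem Kset_unbounded {nx nu ny nw nz : ℕ} (hnx : 1 ≤ nx) (hnu : 0 < nu) (hny : 0 < ny)
    (hnw : 0 < nw) (hnz : 0 < nz) (P : Plant nx nu ny nw nz) (γ : ℝ) (hγ : 0 < γ)
    (hne : (P.Kset γ).Nonempty) :
    ∀ r : ℝ, 0 < r → ∃ K ∈ P.Kset γ, frobNorm K > r :=
  Kset_unbounded_general hnx P γ hne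
end
end

section
/- For the scalar plant with n_x = n_u = n_y = n_w = n_z = 1, A = B₁ = B₂ = C₁ = C₂ = D₁₂ = D₂₁ = 1 and D₁₁ = 0, the controllers K⁽¹⁾ = [[0, 2],[−2, −2]] and K⁽²⁾ = [[0, −2],[2, −2]] both belong to K_{3.33}, while their midpoint (1/2)(K⁽¹⁾ + K⁽²⁾) = [[0, 0],[0, −2]] is not stabilizing (its closed-loop matrix A_cl is not Hurwitz). Consequently the set K_{3.33} is not convex. -/
/-!
Both controllers belong to the family `[[0, 2ε], [-2ε, -2]]` with `ε = ±1`, and only `ε ^ 2`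
enters the closed loop: the closed-loop matrix has trace `-1` and determinant `2`, so it is
Hurwitz, and the transfer function is `(-2 - 3s) / (s ^ 2 + s + 2)` in both cases, with
H∞ norm `≈ 3.324 < 3.33`. In the midpoint the off-diagonal entries cancel, leaving the closed-loop
matrix `diag(1, -2)`, whose determinant is negative, so it has a nonnegative real eigenvalue.
-/

open Matrix

noncomputable section

/-- The scalar example plant: `n_x = n_u = n_y = n_w = n_z = 1`,
`A = B₁ = B₂ = C₁ = C₂ = D₁₂ = D₂₁ = 1` and `D₁₁ = 0`. -/
def examplePlant : Plant 1 1 1 1 1 :=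
  ⟨1, 1, 1, 1, 1, 0, 1, 1⟩

/-- The controller `K⁽¹⁾ = [[0, 2],[−2, −2]]`. -/
def Kone : Matrix (Fin 1 ⊕ Fin 1) (Fin 1 ⊕ Fin 1) ℝ :=
  fromBlocks !![0] !![2] !![-2] !![-2]

/-- The controller `K⁽²⁾ = [[0, −2],[2, −2]]`. -/
def Ktwo : Matrix (Fin 1 ⊕ Fin 1) (Fin 1 ⊕ Fin 1) ℝ :=
  fromBlocks !![0] !![-2] !![2] !![-2]


namespace Matrix

variable {α : Type*}

theorem fromBlocks_fin_one_ext {M N : Matrix (Fin 1 ⊕ Fin 1) (Fin 1 ⊕ Fin 1) α}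
    (h₁₁ : M (.inl 0) (.inl 0) = N (.inl 0) (.inl 0))
    (h₁₂ : M (.inl 0) (.inr 0) = N (.inl 0) (.inr 0))
    (h₂₁ : M (.inr 0) (.inl 0) = N (.inr 0) (.inl 0))
    (h₂₂ : M (.inr 0) (.inr 0) = N (.inr 0) (.inr 0)) : M = N := by
  ext (i | i) (j | j) <;> fin_cases i <;> fin_cases j <;> assumption

theorem det_fromBlocks_fin_one [CommRing α] (a b c d : α) :
    (fromBlocks !![a] !![b] !![c] !![d]).det = a * d - b * c := by
  rw [← det_submatrix_equiv_self finSumFinEquiv.symm, ← det_fin_two_of]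
  congr 1
  ext i j
  fin_cases i <;> fin_cases j <;> rfl

theorem inv_fromBlocks_fin_one [Field α] {a b c d : α} (h : a * d - b * c ≠ 0) :
    (fromBlocks !![a] !![b] !![c] !![d])⁻¹ =
      fromBlocks !![d / (a * d - b * c)] !![-b / (a * d - b * c)]
        !![-c / (a * d - b * c)] !![a / (a * d - b * c)] := by
  set δ := a * d - b * c
  refine inv_eq_right_inv ?_
  rw [fromBlocks_multiply, ← fromBlocks_one]
  apply fromBlocks_fin_one_ext <;> simp <;> field_simp <;> ring

theorem sub_fromBlocks_fin_one [Ring α] (μ a b c d : α) :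
    μ • (1 : Matrix (Fin 1 ⊕ Fin 1) (Fin 1 ⊕ Fin 1) α) - fromBlocks !![a] !![b] !![c] !![d] =
      fromBlocks !![μ - a] !![-b] !![-c] !![μ - d] := by
  apply fromBlocks_fin_one_ext <;> simp

theorem mem_spectrum_fromBlocks_fin_one_iff [Field α] {a b c d μ : α} :
    μ ∈ spectrum α (fromBlocks !![a] !![b] !![c] !![d]) ↔ (μ - a) * (μ - d) - b * c = 0 := by
  rw [spectrum.mem_iff, isUnit_iff_isUnit_det, isUnit_iff_ne_zero, not_not,
    Algebra.algebraMap_eq_smul_one, sub_fromBlocks_fin_one, det_fromBlocks_fin_one]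
  ring_nf

theorem map_fromBlocks_fin_one {β : Type*} (f : α → β) (a b c d : α) :
    (fromBlocks !![a] !![b] !![c] !![d]).map f = fromBlocks !![f a] !![f b] !![f c] !![f d] := by
  apply fromBlocks_fin_one_ext <;> rfl

end Matrix

theorem Complex.re_neg_of_sq_sub_mul_add_eq_zero {t δ : ℝ} (ht : t < 0) (hδ : 0 < δ) {μ : ℂ}
    (hμ : μ ^ 2 - t * μ + δ = 0) : μ.re < 0 := by
  have hre := congrArg Complex.re hμ
  have him := congrArg Complex.im hμ
  simp only [pow_two, add_re, sub_re, mul_re, ofReal_re, ofReal_im, zero_mul, sub_zero, zero_re,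
    add_im, sub_im, mul_im, add_zero, zero_im] at hre him
  by_contra! hx
  have hy : μ.im = 0 :=
    (mul_eq_zero.1 (by linarith : μ.im * (2 * μ.re - t) = 0)).resolve_right (by linarith)
  rw [hy] at hre
  nlinarith

theorem isHurwitz_fromBlocks_fin_one {a b c d : ℝ} (htr : a + d < 0) (hdet : 0 < a * d - b * c) :
    IsHurwitz (fromBlocks !![a] !![b] !![c] !![d]) := by
  intro μ hμ
  rw [map_fromBlocks_fin_one, mem_spectrum_fromBlocks_fin_one_iff] at hμ
  refine Complex.re_neg_of_sq_sub_mul_add_eq_zero htr hdet ?_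
  push_cast
  linear_combination hμ

theorem not_isHurwitz_fromBlocks_fin_one_of_det_nonpos {a b c d : ℝ} (hdet : a * d - b * c ≤ 0) :
    ¬ IsHurwitz (fromBlocks !![a] !![b] !![c] !![d]) := by
  set t := a + d
  set s := √(t ^ 2 - 4 * (a * d - b * c))
  have hs : s ^ 2 = t ^ 2 - 4 * (a * d - b * c) := Real.sq_sqrt (by nlinarith)
  have hts : |t| ≤ s := Real.abs_le_sqrt (by nlinarith)
  intro h
  -- the larger root of `μ ^ 2 - t * μ + (a * d - b * c)`, which is real and nonnegative
  have := h ((t + s) / 2 : ℝ) ?_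
  · simp only [Complex.ofReal_div, Complex.ofReal_add, Complex.ofReal_ofNat, Complex.div_ofNat_re,
      Complex.add_re, Complex.ofReal_re] at this
    linarith [neg_abs_le t]
  rw [map_fromBlocks_fin_one, mem_spectrum_fromBlocks_fin_one_iff]
  have : ((t + s) / 2 - a) * ((t + s) / 2 - d) - b * c = 0 := by
    linear_combination hs / 4
  exact_mod_cast this

theorem matOpNorm_fin_one (M : Matrix (Fin 1) (Fin 1) ℂ) : matOpNorm M = ‖M 0 0‖ := by
  have hM : ∀ v : EuclideanSpace ℂ (Fin 1),
      ‖(Matrix.toEuclideanLin M).toContinuousLinearMap v‖ = ‖M 0 0‖ * ‖v‖ := by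
    intro v
    simp [EuclideanSpace.norm_eq, Matrix.mulVec, dotProduct, Real.sqrt_sq, mul_nonneg]
  refine le_antisymm (ContinuousLinearMap.opNorm_le_bound _ (norm_nonneg _) (fun v => (hM v).le)) ?_
  have h := (Matrix.toEuclideanLin M).toContinuousLinearMap.le_opNorm (EuclideanSpace.single 0 1)
  rw [hM, PiLp.norm_single, norm_one, mul_one, mul_one] at h
  exact h

theorem half_smul_Kone_add_Ktwo :
    (1 / 2 : ℝ) • (Kone + Ktwo) = fromBlocks !![0] !![0] !![0] !![-2] := by
  apply fromBlocks_fin_one_ext <;> norm_num [Kone, Ktwo]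

def exampleController (ε : ℝ) : Matrix (Fin 1 ⊕ Fin 1) (Fin 1 ⊕ Fin 1) ℝ :=
  fromBlocks !![0] !![2 * ε] !![-(2 * ε)] !![-2]

theorem sq_norm_I_mul_sq_add_I_mul_add_two (ω : ℝ) :
    ‖(Complex.I * ω) ^ 2 + Complex.I * ω + 2‖ ^ 2 = (2 - ω ^ 2) ^ 2 + ω ^ 2 := by
  have h : (Complex.I * ω) ^ 2 + Complex.I * ω + 2 = (2 - ω ^ 2 : ℝ) + (ω : ℝ) * Complex.I := by
    push_cast
    linear_combination (ω : ℂ) ^ 2 * Complex.I_sq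
  rw [h, Complex.sq_norm, Complex.normSq_add_mul_I]

theorem sq_norm_neg_two_sub_three_mul_I_mul (ω : ℝ) :
    ‖-2 - 3 * (Complex.I * ω)‖ ^ 2 = 4 + 9 * ω ^ 2 := by
  have h : -2 - 3 * (Complex.I * ω) = (-2 : ℝ) + (-3 * ω : ℝ) * Complex.I := by
    push_cast
    ring
  rw [h, Complex.sq_norm, Complex.normSq_add_mul_I]
  ring

namespace examplePlant

variable (dk ck bk ak : ℝ) {ε : ℝ}

theorem Acl_fromBlocks :
    examplePlant.Acl (fromBlocks !![dk] !![ck] !![bk] !![ak]) =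
      fromBlocks !![1 + dk] !![ck] !![bk] !![ak] := by
  apply fromBlocks_fin_one_ext <;> simp [Plant.Acl, examplePlant]

theorem Bcl_fromBlocks :
    examplePlant.Bcl (fromBlocks !![dk] !![ck] !![bk] !![ak]) = fromRows !![1 + dk] !![bk] := by
  ext (i | i) j <;> fin_cases i <;> fin_cases j <;> simp [Plant.Bcl, examplePlant]

theorem Ccl_fromBlocks :
    examplePlant.Ccl (fromBlocks !![dk] !![ck] !![bk] !![ak]) = fromCols !![1 + dk] !![ck] := by
  ext i (j | j) <;> fin_cases i <;> fin_cases j <;> simp [Plant.Ccl, examplePlant]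

theorem Dcl_fromBlocks :
    examplePlant.Dcl (fromBlocks !![dk] !![ck] !![bk] !![ak]) = !![dk] := by
  simp [Plant.Dcl, examplePlant]

theorem transferAt_exampleController (hε : ε ^ 2 = 1) (ω : ℝ) :
    examplePlant.transferAt (exampleController ε) ω =
      !![(-2 - 3 * (Complex.I * ω)) / ((Complex.I * ω) ^ 2 + Complex.I * ω + 2)] := by
  have hnorm := sq_norm_I_mul_sq_add_I_mul_add_two ω
  set s := Complex.I * ω
  set Δ := s ^ 2 + s + 2
  have hε' : (ε : ℂ) ^ 2 = 1 := by exact_mod_cast hε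
  have hdet : (s - 1) * (s + 2) - -(2 * ε : ℂ) * (2 * ε) = Δ := by
    linear_combination 4 * hε'
  have hΔ0 : Δ ≠ 0 := by
    intro h
    rw [h, norm_zero] at hnorm
    nlinarith [sq_nonneg ω, sq_nonneg (2 - ω ^ 2)]
  have hR : s • (1 : Matrix (Fin 1 ⊕ Fin 1) (Fin 1 ⊕ Fin 1) ℂ) -
      (examplePlant.Acl (exampleController ε)).map (Complex.ofReal ·) =
        fromBlocks !![s - 1] !![-(2 * ε : ℂ)] !![2 * ε] !![s + 2] := by
    rw [exampleController, Acl_fromBlocks, map_fromBlocks_fin_one, sub_fromBlocks_fin_one]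
    push_cast
    ring_nf
  rw [Plant.transferAt, hR, inv_fromBlocks_fin_one (hdet ▸ hΔ0), hdet, exampleController,
    Bcl_fromBlocks, Ccl_fromBlocks, Dcl_fromBlocks]
  ext i j
  fin_cases i; fin_cases j
  simp [mul_apply, Fintype.sum_sum_type]
  field_simp
  linear_combination (-4 - 4 * s) * hε'

-- The supremum over `ω` is `√((4 + 9x) / (x ^ 2 - 3x + 4)) ≈ 3.324`, attained at
-- `x = ω ^ 2 ≈ 1.907`; `133 / 40` is a rational bound between it and `3.33`.
theorem hinfNorm_exampleController_le (hε : ε ^ 2 = 1) :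
    examplePlant.hinfNorm (exampleController ε) ≤ 133 / 40 := by
  refine ciSup_le fun ω => ?_
  have hden := sq_norm_I_mul_sq_add_I_mul_add_two ω
  have hden_pos : 0 < ‖(Complex.I * ω) ^ 2 + Complex.I * ω + 2‖ := by
    rw [← sq_lt_sq₀ le_rfl (norm_nonneg _), hden]
    nlinarith [sq_nonneg ω, sq_nonneg (2 - ω ^ 2)]
  rw [transferAt_exampleController hε, matOpNorm_fin_one, of_apply, cons_val', cons_val_fin_one,
    cons_val_fin_one, norm_div, div_le_iff₀ hden_pos, ← sq_le_sq₀ (norm_nonneg _) (by positivity),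
    mul_pow, sq_norm_neg_two_sub_three_mul_I_mul, hden]
  nlinarith [sq_nonneg (ω ^ 2 - 67467 / 35378), sq_nonneg ω, sq_nonneg (ω ^ 2 - 2)]

theorem exampleController_mem_Cstab (hε : ε ^ 2 = 1) :
    exampleController ε ∈ examplePlant.Cstab := by
  show IsHurwitz (examplePlant.Acl _)
  rw [exampleController, Acl_fromBlocks]
  apply isHurwitz_fromBlocks_fin_one <;> nlinarith

theorem exampleController_mem_Kset (hε : ε ^ 2 = 1) :
    exampleController ε ∈ examplePlant.Kset 3.33 :=
  ⟨exampleController_mem_Cstab hε, (hinfNorm_exampleController_le hε).trans_lt (by norm_num)⟩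

theorem half_smul_Kone_add_Ktwo_not_mem_Cstab :
    (1 / 2 : ℝ) • (Kone + Ktwo) ∉ examplePlant.Cstab := by
  show ¬ IsHurwitz (examplePlant.Acl _)
  rw [half_smul_Kone_add_Ktwo, Acl_fromBlocks]
  exact not_isHurwitz_fromBlocks_fin_one_of_det_nonpos (by norm_num)

end examplePlant

/-- For the scalar plant, `K⁽¹⁾, K⁽²⁾ ∈ K_{3.33}`, while their midpoint
`[[0,0],[0,−2]]` is not stabilizing; consequently `K_{3.33}` is not convex. -/
theorem Kset_not_convex :
    Kone ∈ examplePlant.Kset 3.33 ∧ Ktwo ∈ examplePlant.Kset 3.33 ∧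
    ((1 / 2 : ℝ) • (Kone + Ktwo) = fromBlocks !![0] !![0] !![0] !![-2]) ∧
    (1 / 2 : ℝ) • (Kone + Ktwo) ∉ examplePlant.Cstab ∧
    ¬ Convex ℝ (examplePlant.Kset 3.33) := by
  have hK₁ : Kone ∈ examplePlant.Kset 3.33 := by
    simpa [exampleController, Kone] using
      examplePlant.exampleController_mem_Kset (ε := 1) (by norm_num)
  have hK₂ : Ktwo ∈ examplePlant.Kset 3.33 := by
    simpa [exampleController, Ktwo] using
      examplePlant.exampleController_mem_Kset (ε := -1) (by norm_num)
  refine ⟨hK₁, hK₂, half_smul_Kone_add_Ktwo,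
    examplePlant.half_smul_Kone_add_Ktwo_not_mem_Cstab, fun hconv => ?_⟩
  have hmid := hconv hK₁ hK₂ (by norm_num) (by norm_num) (add_halves 1)
  rw [← smul_add] at hmid
  exact examplePlant.half_smul_Kone_add_Ktwo_not_mem_Cstab hmid.1
end
end

section
/- Let X, Y be real symmetric n_x×n_x matrices such that the block matrix [[X, I],[I, Y]] is positive definite, and let Π, Ξ ∈ ℝ^{n_x×n_x} satisfy ΞΠ = I − YX. Then Π and Ξ are invertible and, for any B₂ ∈ ℝ^{n_x×n_u} and C₂ ∈ ℝ^{n_y×n_x}, the block-triangular matrices [[I_{n_u}, 0],[YB₂, Ξ]] ∈ ℝ^{(n_u+n_x)×(n_u+n_x)} and [[I_{n_y}, C₂X],[0, Π]] ∈ ℝ^{(n_y+n_x)×(n_y+n_x)} are invertible. -/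
open Matrix

/-!
Exchanging the two block rows of `[[X, I], [I, Y]]` gives `[[I, Y], [X, I]]`, whose determinant
is `det (I - Y X)` by the Schur complement. So positive definiteness of the block matrix makes
`I - Y X = Ξ Π` invertible, hence both factors are, and the block-triangular matrices are invertible
because their diagonal blocks are.
-/

namespace Matrix

theorem fromBlocks_swap_mul {m n p q α : Type*} [Fintype m] [Fintype n] [DecidableEq m]
    [DecidableEq n] [Semiring α] (A : Matrix m p α) (B : Matrix m q α) (C : Matrix n p α)
    (D : Matrix n q α) :
    fromBlocks 0 (1 : Matrix n n α) (1 : Matrix m m α) 0 * fromBlocks A B C D =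
      fromBlocks C D A B := by
  simp [fromBlocks_multiply]

variable {n : Type*} [Fintype n] [DecidableEq n] {α : Type*} [CommRing α]

theorem isUnit_fromBlocks_swap :
    IsUnit (fromBlocks 0 (1 : Matrix n n α) (1 : Matrix n n α) 0) :=
  IsUnit.of_mul_eq_one _ <| by
    simpa using fromBlocks_swap_mul (m := n) (n := n) (p := n) (q := n) (α := α) 0 1 1 0

theorem isUnit_fromBlocks_one₁₂_one₂₁_iff {A D : Matrix n n α} :
    IsUnit (fromBlocks A 1 1 D) ↔ IsUnit (1 - D * A) := by
  rw [← isUnit_fromBlocks_swap.mul_left_iff, fromBlocks_swap_mul, isUnit_iff_isUnit_det,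
    isUnit_iff_isUnit_det (1 - D * A), det_fromBlocks_one₂₂]

end Matrix

theorem pi_xi_invertible_general {nx nu ny : ℕ}
    (X Y : Matrix (Fin nx) (Fin nx) ℝ)
    (hPD : (fromBlocks X (1 : Matrix (Fin nx) (Fin nx) ℝ) 1 Y).PosDef)
    (Pm Ξ : Matrix (Fin nx) (Fin nx) ℝ) (hΞP : Ξ * Pm = 1 - Y * X)
    (B₂ : Matrix (Fin nx) (Fin nu) ℝ) (C₂ : Matrix (Fin ny) (Fin nx) ℝ) :
    IsUnit Pm ∧ IsUnit Ξ ∧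
    IsUnit (fromBlocks (1 : Matrix (Fin nu) (Fin nu) ℝ) 0 (Y * B₂) Ξ) ∧
    IsUnit (fromBlocks (1 : Matrix (Fin ny) (Fin ny) ℝ) (C₂ * X) 0 Pm) := by
  have hΞPm : IsUnit (Ξ * Pm) := hΞP ▸ isUnit_fromBlocks_one₁₂_one₂₁_iff.mp hPD.isUnit
  obtain ⟨hΞ, hPm⟩ := IsUnit.mul_iff.mp hΞPm
  exact ⟨hPm, hΞ, isUnit_fromBlocks_zero₁₂.mpr ⟨isUnit_one, hΞ⟩,
    isUnit_fromBlocks_zero₂₁.mpr ⟨isUnit_one, hPm⟩⟩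

/-- If `X, Y` are real symmetric `n_x × n_x` matrices with
`[[X, I],[I, Y]]` positive definite and `Ξ·Π = I − YX`, then `Π` and `Ξ` are invertible and,
for any `B₂`, `C₂`, the block triangular matrices `[[I, 0],[YB₂, Ξ]]` and `[[I, C₂X],[0, Π]]`
are invertible.  (Here `Pm` plays the role of `Π` and `Ξ` the role of `Ξ`.) -/
theorem pi_xi_invertible {nx nu ny : ℕ}
    (X Y : Matrix (Fin nx) (Fin nx) ℝ) (hX : X.IsSymm) (hY : Y.IsSymm)
    (hPD : (fromBlocks X (1 : Matrix (Fin nx) (Fin nx) ℝ) 1 Y).PosDef)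
    (Pm Ξ : Matrix (Fin nx) (Fin nx) ℝ) (hΞP : Ξ * Pm = 1 - Y * X)
    (B₂ : Matrix (Fin nx) (Fin nu) ℝ) (C₂ : Matrix (Fin ny) (Fin nx) ℝ) :
    IsUnit Pm ∧ IsUnit Ξ ∧
    IsUnit (fromBlocks (1 : Matrix (Fin nu) (Fin nu) ℝ) 0 (Y * B₂) Ξ) ∧
    IsUnit (fromBlocks (1 : Matrix (Fin ny) (Fin ny) ℝ) (C₂ * X) 0 Pm) :=
  pi_xi_invertible_general X Y hPD Pm Ξ hΞP B₂ C₂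
end

section
/- Let γ > 0 and n_x ≥ 1. The sets G⁺ = {Z ∈ G_γ : det Π > 0} and G⁻ = {Z ∈ G_γ : det Π < 0} are disjoint and satisfy G_γ = G⁺ ∪ G⁻; moreover, if F_γ is nonempty then G⁺ and G⁻ are each nonempty and path-connected, so G_γ has exactly two path-connected components. -/
open Matrix

noncomputable section

/-- The symmetric block matrix `M_γ(X, Y, Â, B̂, Ĉ, D̂)` from the change of variables in
`H∞` synthesis. -/
def Mγmat {nx nu ny nw nz : ℕ} (P : Plant nx nu ny nw nz) (γ : ℝ)
    (X Y Ah : Matrix (Fin nx) (Fin nx) ℝ) (Bh : Matrix (Fin nx) (Fin ny) ℝ)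
    (Ch : Matrix (Fin nu) (Fin nx) ℝ) (Dh : Matrix (Fin nu) (Fin ny) ℝ) :
    Matrix ((Fin nx ⊕ Fin nx) ⊕ (Fin nw ⊕ Fin nz)) ((Fin nx ⊕ Fin nx) ⊕ (Fin nw ⊕ Fin nz)) ℝ :=
  let M11 := P.A * X + X * P.Aᵀ + P.B2 * Ch + (P.B2 * Ch)ᵀ
  let M12 := Ahᵀ + (P.A + P.B2 * Dh * P.C2)
  let M13 := P.B1 + P.B2 * Dh * P.D21
  let M14 := (P.C1 * X + P.D12 * Ch)ᵀ
  let M22 := P.Aᵀ * Y + Y * P.A + Bh * P.C2 + (Bh * P.C2)ᵀ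
  let M23 := Y * P.B1 + Bh * P.D21
  let M24 := (P.C1 + P.D12 * Dh * P.C2)ᵀ
  let M34 := (P.D11 + P.D12 * Dh * P.D21)ᵀ
  fromBlocks (fromBlocks M11 M12 M12ᵀ M22) (fromBlocks M13 M14 M23 M24)
    (fromBlocks M13ᵀ M23ᵀ M14ᵀ M24ᵀ)
    (fromBlocks ((-γ) • (1 : Matrix (Fin nw) (Fin nw) ℝ)) M34 M34ᵀ
      ((-γ) • (1 : Matrix (Fin nz) (Fin nz) ℝ)))

/-- The tuple `(X, Y, Â, B̂, Ĉ, D̂)` of decision variables of the LMI. -/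
abbrev FTuple (nx nu ny : ℕ) : Type :=
  Matrix (Fin nx) (Fin nx) ℝ × Matrix (Fin nx) (Fin nx) ℝ × Matrix (Fin nx) (Fin nx) ℝ ×
    Matrix (Fin nx) (Fin ny) ℝ × Matrix (Fin nu) (Fin nx) ℝ × Matrix (Fin nu) (Fin ny) ℝ

/-- The tuple `(X, Y, Â, B̂, Ĉ, D̂, Π, Ξ)`. -/
abbrev GTuple (nx nu ny : ℕ) : Type :=
  FTuple nx nu ny × Matrix (Fin nx) (Fin nx) ℝ × Matrix (Fin nx) (Fin nx) ℝ

/-- The convex set `F_γ`: tuples `(X, Y, Â, B̂, Ĉ, D̂)` with `X, Y` symmetric,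
`[[X, I],[I, Y]] ≻ 0` and `M_γ(X,Y,Â,B̂,Ĉ,D̂) ≺ 0`. -/
def Fset {nx nu ny nw nz : ℕ} (P : Plant nx nu ny nw nz) (γ : ℝ) : Set (FTuple nx nu ny) :=
  {W | W.1.IsSymm ∧ W.2.1.IsSymm ∧
    (fromBlocks W.1 (1 : Matrix (Fin nx) (Fin nx) ℝ) 1 W.2.1).PosDef ∧
    (-(Mγmat P γ W.1 W.2.1 W.2.2.1 W.2.2.2.1 W.2.2.2.2.1 W.2.2.2.2.2)).PosDef}

/-- The set `G_γ`: tuples `(X, Y, Â, B̂, Ĉ, D̂, Π, Ξ)` with `(X,…,D̂) ∈ F_γ` and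
`Ξ·Π = I − YX`. -/
def Gset {nx nu ny nw nz : ℕ} (P : Plant nx nu ny nw nz) (γ : ℝ) : Set (GTuple nx nu ny) :=
  {Z | Z.1 ∈ Fset P γ ∧ Z.2.2 * Z.2.1 = 1 - Z.1.2.1 * Z.1.1}

/-- The controller-reconstruction map `Φ`. -/
def Phi {nx nu ny nw nz : ℕ} (P : Plant nx nu ny nw nz) (Z : GTuple nx nu ny) :
    Matrix (Fin nu ⊕ Fin nx) (Fin ny ⊕ Fin nx) ℝ :=
  match Z with
  | ((X, Y, Ah, Bh, Ch, Dh), Pm, Ξ) =>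
    (fromBlocks (1 : Matrix (Fin nu) (Fin nu) ℝ) 0 (Y * P.B2) Ξ)⁻¹ *
      fromBlocks Dh Ch Bh (Ah - Y * P.A * X) *
      (fromBlocks (1 : Matrix (Fin ny) (Fin ny) ℝ) (P.C2 * X) 0 Pm)⁻¹

/-!
Since `[[X, I], [I, Y]] ≻ 0`, the matrix `I - YX` is invertible, so `ΞΠ = I - YX` forces `Π` to
be invertible and `Ξ = (I - YX)Π⁻¹`. Hence `G⁺` and `G⁻` are the images of `F_γ × GL⁺` and
`F_γ × GL⁻` under the continuous map `(W, Π) ↦ (W, Π, (I - YX)Π⁻¹)`, and the sign of `det Π`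
cannot change along a path in `G_γ`. The set `F_γ` is convex because `M_γ` is affine in the
decision variables. Finally `GL⁺` and `GL⁻` are path-connected: writing an invertible matrix as a
product of transvections and a diagonal matrix joins it to `diag(det M, 1, …, 1)` inside `GL`,
and signs move between diagonal entries because `diag(-1, -1)` lies in the identity component
of `SL₂`.
-/

open Set

theorem JoinedIn.of_continuous_of_mapsTo_uIcc {X : Type*} [TopologicalSpace X] {S : Set X}
    {f : ℝ → X} (hf : Continuous f) {a b : ℝ} (hS : MapsTo f (uIcc a b) S) :
    JoinedIn S (f a) (f b) :=
  ((((convex_uIcc a b).isPathConnected nonempty_uIcc).joinedIn a left_mem_uIcc b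
    right_mem_uIcc).map hf).mono (mapsTo_iff_image_subset.1 hS)

theorem JoinedIn.pos_of_ne_zero {X : Type*} [TopologicalSpace X] {f : X → ℝ} (hf : Continuous f)
    {S : Set X} {x y : X} (h : JoinedIn S x y) (hS : ∀ z ∈ S, f z ≠ 0) (hx : 0 < f x) :
    JoinedIn {z | 0 < f z} x y := by
  obtain ⟨p, hp⟩ := h
  refine ⟨p, fun t => show 0 < f (p t) from not_le.1 fun ht => ?_⟩
  obtain ⟨s, hs⟩ := intermediate_value_univ t 0 (hf.comp p.continuous)
    ⟨ht, by simpa using hx.le⟩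
  exact hS _ (hp s) hs

namespace Matrix

variable {n : Type*} [DecidableEq n]

theorem continuous_transvection (i j : n) : Continuous (transvection i j : ℝ → Matrix n n ℝ) := by
  have : (transvection i j : ℝ → Matrix n n ℝ) = fun t => 1 + t • single i j 1 := by
    ext t : 1; simp [transvection, smul_single]
  rw [this]; fun_prop

variable [Fintype n]

variable (n) in
def nonsingular : Set (Matrix n n ℝ) := {M | M.det ≠ 0}

@[simp]
theorem mem_nonsingular {M : Matrix n n ℝ} : M ∈ nonsingular n ↔ M.det ≠ 0 := Iff.rfl

theorem _root_.JoinedIn.mul_nonsingular {A B C D : Matrix n n ℝ}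
    (hAB : JoinedIn (nonsingular n) A B) (hCD : JoinedIn (nonsingular n) C D) :
    JoinedIn (nonsingular n) (A * C) (B * D) :=
  (hAB.mul hCD).mono <| by
    rintro _ ⟨M, hM, N, hN, rfl⟩
    simpa using mul_ne_zero hM hN

theorem joinedIn_transvection_one {i j : n} (hij : i ≠ j) (c : ℝ) :
    JoinedIn (nonsingular n) (transvection i j c) 1 := by
  simpa using JoinedIn.of_continuous_of_mapsTo_uIcc (continuous_transvection i j)
    (a := c) (b := 0) fun t _ => by simp [det_transvection_of_ne _ _ hij]

theorem det_diagonal_mulSingle (i : n) (c : ℝ) : (diagonal (Pi.mulSingle i c)).det = c := by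
  rw [det_diagonal, Fintype.prod_pi_mulSingle']

theorem diagonal_mulSingle_mul (i : n) (c d : ℝ) :
    diagonal (Pi.mulSingle i c) * diagonal (Pi.mulSingle i d) =
      diagonal (Pi.mulSingle i (c * d)) := by
  rw [diagonal_mul_diagonal, Pi.mulSingle_mul]
  rfl

theorem joinedIn_diagonal_mulSingle_of_mul_pos (i : n) {c d : ℝ} (hcd : 0 < c * d) :
    JoinedIn (nonsingular n) (diagonal (Pi.mulSingle i c)) (diagonal (Pi.mulSingle i d)) := by
  refine JoinedIn.of_continuous_of_mapsTo_uIcc (continuous_mulSingle i).matrix_diagonal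
    fun t ht => ?_
  intro h
  rw [det_diagonal_mulSingle] at h
  subst h
  rcases mem_uIcc.1 ht with h | h <;> nlinarith

/- `T_ij(1) T_ji(-1) T_ij(1)` is the quarter turn of the `(i, j)`-plane, so its square is `-1` on
that plane; deforming `1` to it through `T_ij(s) T_ji(-s) T_ij(s)` keeps the determinant `1`. -/
theorem sq_transvection_mul_transvection_mul_transvection {i j : n} (hij : i ≠ j) :
    (transvection i j (1 : ℝ) * transvection j i (-1) * transvection i j 1) ^ 2 =
      diagonal (Pi.mulSingle i (-1)) * diagonal (Pi.mulSingle j (-1)) := by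
  rw [sq, ← Matrix.mul_one (_ * _), diagonal_mul_diagonal']
  ext a b
  simp only [Matrix.mul_assoc]
  by_cases hai : a = i <;> by_cases haj : a = j <;>
    simp only [transvection_mul_apply_same, transvection_mul_apply_of_ne, hai, haj, hij,
      hij.symm, Ne, not_false_eq_true, one_apply, diagonal_apply, Pi.mulSingle_apply] <;>
    split_ifs <;> simp_all

theorem joinedIn_diagonal_mulSingle_neg_one_mul_one {i j : n} (hij : i ≠ j) :
    JoinedIn (nonsingular n)
      (diagonal (Pi.mulSingle i (-1)) * diagonal (Pi.mulSingle j (-1))) 1 := by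
  have hT := continuous_transvection (n := n) i j
  have hT' := continuous_transvection (n := n) j i
  rw [← sq_transvection_mul_transvection_mul_transvection hij]
  convert JoinedIn.of_continuous_of_mapsTo_uIcc (S := nonsingular n) (a := 1) (b := 0)
    (f := fun s => (transvection i j s * transvection j i (-s) * transvection i j s) ^ 2)
    (by fun_prop)
    fun t _ => by simp [det_transvection_of_ne _ _ hij, det_transvection_of_ne _ _ hij.symm]
  simp

theorem joinedIn_diagonal_mulSingle_swap (i j : n) {c : ℝ} (hc : c ≠ 0) :
    JoinedIn (nonsingular n) (diagonal (Pi.mulSingle i c)) (diagonal (Pi.mulSingle j c)) := by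
  rcases eq_or_ne i j with rfl | hij
  · exact JoinedIn.refl (by simpa [det_diagonal_mulSingle] using hc)
  rcases hc.lt_or_gt with hc | hc
  · have hi := joinedIn_diagonal_mulSingle_of_mul_pos i (c := c) (d := -1) (by nlinarith)
    have hj := joinedIn_diagonal_mulSingle_of_mul_pos j (c := c) (d := -1) (by nlinarith)
    have hflip := JoinedIn.mul_nonsingular (JoinedIn.refl (x := diagonal (Pi.mulSingle j (-1)))
      (by simp)) (joinedIn_diagonal_mulSingle_neg_one_mul_one hij.symm)
    rw [← Matrix.mul_assoc, diagonal_mulSingle_mul, mul_one] at hflip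
    norm_num at hflip
    exact hi.trans (hflip.trans hj.symm)
  · have hi := joinedIn_diagonal_mulSingle_of_mul_pos i (d := 1) (c := c) (by simpa)
    have hj := joinedIn_diagonal_mulSingle_of_mul_pos j (d := 1) (c := c) (by simpa)
    rw [Pi.mulSingle_one] at hi hj
    exact hi.trans hj.symm

theorem _root_.JoinedIn.mul_diagonal_mulSingle_det {i₀ : n} {A B : Matrix n n ℝ}
    (hA : JoinedIn (nonsingular n) A (diagonal (Pi.mulSingle i₀ A.det)))
    (hB : JoinedIn (nonsingular n) B (diagonal (Pi.mulSingle i₀ B.det))) :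
    JoinedIn (nonsingular n) (A * B) (diagonal (Pi.mulSingle i₀ (A * B).det)) := by
  rw [det_mul, ← diagonal_mulSingle_mul]
  exact hA.mul_nonsingular hB

theorem joinedIn_diagonal_mulSingle_det (i₀ : n) {M : Matrix n n ℝ} (hM : M.det ≠ 0) :
    JoinedIn (nonsingular n) M (diagonal (Pi.mulSingle i₀ M.det)) := by
  refine diagonal_transvection_induction_of_det_ne_zero
    (fun M => JoinedIn (nonsingular n) M (diagonal (Pi.mulSingle i₀ M.det))) M hM
    (fun d hd => ?_) (fun t => by
      rw [t.det]; simpa [TransvectionStruct.toMatrix] using joinedIn_transvection_one t.hij t.c)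
    (fun A B _ _ => JoinedIn.mul_diagonal_mulSingle_det)
  rw [← Finset.univ_prod_mulSingle d]
  refine Finset.prod_induction _
    (fun v => JoinedIn (nonsingular n) (diagonal v)
      (diagonal (Pi.mulSingle i₀ (diagonal v).det)))
    (fun v w hv hw => by
      rw [show diagonal (v * w) = diagonal v * diagonal w from (diagonal_mul_diagonal v w).symm]
      exact hv.mul_diagonal_mulSingle_det hw)
    (by simpa using JoinedIn.refl (by simp)) fun k _ => ?_
  rw [det_diagonal_mulSingle]
  refine joinedIn_diagonal_mulSingle_swap k i₀ ?_
  rw [det_diagonal] at hd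
  exact Finset.prod_ne_zero_iff.1 hd k (Finset.mem_univ k)

theorem joinedIn_diagonal_mulSingle_of_mul_det_pos (i₀ : n) {M : Matrix n n ℝ} {c : ℝ}
    (hMc : 0 < M.det * c) : JoinedIn (nonsingular n) M (diagonal (Pi.mulSingle i₀ c)) :=
  (joinedIn_diagonal_mulSingle_det i₀ (left_ne_zero_of_mul hMc.ne')).trans
    (joinedIn_diagonal_mulSingle_of_mul_pos i₀ hMc)

theorem isPathConnected_setOf_det_pos [Nonempty n] :
    IsPathConnected {M : Matrix n n ℝ | 0 < M.det} := by
  refine ⟨1, by simp, fun M hM => ?_⟩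
  have h := joinedIn_diagonal_mulSingle_of_mul_det_pos (Classical.arbitrary n) (c := 1)
    (by simpa using hM)
  simpa using (h.pos_of_ne_zero continuous_id.matrix_det (fun _ => id) hM).symm

theorem isPathConnected_setOf_det_neg [Nonempty n] :
    IsPathConnected {M : Matrix n n ℝ | M.det < 0} := by
  let i₀ := Classical.arbitrary n
  refine ⟨diagonal (Pi.mulSingle i₀ (-1)), by simp, fun M hM => ?_⟩
  have h := joinedIn_diagonal_mulSingle_of_mul_det_pos i₀ (c := -1) (by simpa using hM)
  simpa using (h.pos_of_ne_zero continuous_id.matrix_det.neg (fun _ => neg_ne_zero.2)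
    (neg_pos.2 hM)).symm

end Matrix

theorem Matrix.convex_setOf_posDef {m : Type*} [Fintype m] :
    Convex ℝ {A : Matrix m m ℝ | A.PosDef} := by
  intro A hA B hB a b ha hb hab
  rcases ha.eq_or_lt with rfl | ha
  · obtain rfl : b = 1 := by simpa using hab
    simpa using hB
  · exact (hA.smul ha).add_posSemidef (hB.posSemidef.smul hb)

theorem Matrix.det_one_sub_mul_ne_zero_of_posDef_fromBlocks {m : Type*} [Fintype m]
    [DecidableEq m] {X Y : Matrix m m ℝ} (h : (fromBlocks X 1 1 Y).PosDef) :
    (1 - Y * X).det ≠ 0 := by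
  intro hdet
  obtain ⟨v, hv, hYXv⟩ := exists_mulVec_eq_zero_iff.2 hdet
  have hu : (Sum.elim (-v) (X *ᵥ v) : m ⊕ m → ℝ) ≠ 0 := fun h0 =>
    hv (by simpa using congr_arg (· ∘ Sum.inl) h0)
  have hker : fromBlocks X 1 1 Y *ᵥ Sum.elim (-v) (X *ᵥ v) = 0 := by
    rw [sub_mulVec, one_mulVec, ← mulVec_mulVec, sub_eq_zero] at hYXv
    simp [fromBlocks_mulVec, ← hYXv, mulVec_neg]
  simpa [hker] using h.dotProduct_mulVec_pos hu

section LMI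

variable {nx nu ny nw nz : ℕ} (P : Plant nx nu ny nw nz) (γ : ℝ)

theorem Mγmat_smul_add_smul {a b : ℝ} (hab : a + b = 1)
    (X Y Ah : Matrix (Fin nx) (Fin nx) ℝ) (Bh : Matrix (Fin nx) (Fin ny) ℝ)
    (Ch : Matrix (Fin nu) (Fin nx) ℝ) (Dh : Matrix (Fin nu) (Fin ny) ℝ)
    (X' Y' Ah' : Matrix (Fin nx) (Fin nx) ℝ) (Bh' : Matrix (Fin nx) (Fin ny) ℝ)
    (Ch' : Matrix (Fin nu) (Fin nx) ℝ) (Dh' : Matrix (Fin nu) (Fin ny) ℝ) :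
    Mγmat P γ (a • X + b • X') (a • Y + b • Y') (a • Ah + b • Ah') (a • Bh + b • Bh')
        (a • Ch + b • Ch') (a • Dh + b • Dh') =
      a • Mγmat P γ X Y Ah Bh Ch Dh + b • Mγmat P γ X' Y' Ah' Bh' Ch' Dh' := by
  obtain rfl : b = 1 - a := by linarith
  simp only [Mγmat, fromBlocks_smul, fromBlocks_add, fromBlocks_inj]
  refine ⟨⟨?_, ?_, ?_, ?_⟩, ⟨?_, ?_, ?_, ?_⟩, ⟨?_, ?_, ?_, ?_⟩, ⟨?_, ?_, ?_, ?_⟩⟩ <;>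
  · simp only [Matrix.mul_add, Matrix.add_mul, Matrix.mul_smul, Matrix.smul_mul,
      transpose_add, transpose_smul, smul_add, smul_smul]
    module

theorem Matrix.fromBlocks_smul_add_smul_one_one {m : Type*} [DecidableEq m] {a b : ℝ}
    (hab : a + b = 1)
    (X Y X' Y' : Matrix m m ℝ) :
    fromBlocks (a • X + b • X') 1 1 (a • Y + b • Y') =
      a • fromBlocks X 1 1 Y + b • fromBlocks X' 1 1 Y' := by
  rw [fromBlocks_smul, fromBlocks_smul, fromBlocks_add, ← add_smul, hab, one_smul]

theorem convex_Fset : Convex ℝ (Fset P γ) := by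
  rintro ⟨X, Y, Ah, Bh, Ch, Dh⟩ ⟨hX, hY, hXY, hM⟩ ⟨X', Y', Ah', Bh', Ch', Dh'⟩
    ⟨hX', hY', hXY', hM'⟩ a b ha hb hab
  refine ⟨(hX.smul a).add (hX'.smul b), (hY.smul a).add (hY'.smul b), ?_, ?_⟩
  · show (fromBlocks (a • X + b • X') 1 1 (a • Y + b • Y')).PosDef
    rw [fromBlocks_smul_add_smul_one_one hab]
    exact convex_setOf_posDef hXY hXY' ha hb hab
  · show (-Mγmat P γ (a • X + b • X') (a • Y + b • Y') (a • Ah + b • Ah') (a • Bh + b • Bh')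
      (a • Ch + b • Ch') (a • Dh + b • Dh')).PosDef
    rw [Mγmat_smul_add_smul P γ hab, neg_add, ← smul_neg, ← smul_neg]
    exact convex_setOf_posDef hM hM' ha hb hab

theorem det_ne_zero_of_mem_Gset {Z : GTuple nx nu ny} (hZ : Z ∈ Gset P γ) : Z.2.1.det ≠ 0 :=
  fun h => det_one_sub_mul_ne_zero_of_posDef_fromBlocks hZ.1.2.2.1 <| by
    rw [← hZ.2, det_mul, h, mul_zero]

theorem Gset_sep_eq_image {S : Set (Matrix (Fin nx) (Fin nx) ℝ)}
    (hS : ∀ M ∈ S, M.det ≠ 0) :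
    {Z ∈ Gset P γ | Z.2.1 ∈ S} =
      (fun p => (p.1, p.2, (1 - p.1.2.1 * p.1.1) * p.2⁻¹)) '' (Fset P γ ×ˢ S) := by
  ext ⟨W, Pm, Ξ⟩
  constructor
  · rintro ⟨⟨hW, hΞ⟩, hPm⟩
    refine ⟨(W, Pm), ⟨hW, hPm⟩, ?_⟩
    simp only [← hΞ, Matrix.mul_assoc, mul_nonsing_inv _ (hS Pm hPm).isUnit, mul_one]
  · rintro ⟨⟨W, Pm⟩, ⟨hW, hPm⟩, h⟩
    simp only [Prod.mk.injEq] at h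
    obtain ⟨rfl, rfl, rfl⟩ := h
    exact ⟨⟨hW, by rw [Matrix.mul_assoc, nonsing_inv_mul _ (hS Pm hPm).isUnit, mul_one]⟩, hPm⟩

theorem isPathConnected_Gset_sep (hF : (Fset P γ).Nonempty)
    {S : Set (Matrix (Fin nx) (Fin nx) ℝ)} (hS : IsPathConnected S)
    (hdet : ∀ M ∈ S, M.det ≠ 0) :
    IsPathConnected {Z ∈ Gset P γ | Z.2.1 ∈ S} := by
  rw [Gset_sep_eq_image P γ hdet]
  refine (((convex_Fset P γ).isPathConnected hF).prod hS).image' fun p hp => ?_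
  have hinv : ContinuousAt Inv.inv p.2 := continuousAt_matrix_inv _ <| by
    rw [Ring.inverse_eq_inv']
    exact continuousAt_inv₀ (hdet _ hp.2)
  exact (continuousAt_fst.prodMk (continuousAt_snd.prodMk
    ((continuousAt_const.sub (continuousAt_fst.snd.fst.mul continuousAt_fst.fst)).mul
      (hinv.comp continuousAt_snd)))).continuousWithinAt

end LMI

theorem Gset_two_components_general {nx nu ny nw nz : ℕ} (hnx : 1 ≤ nx)
    (P : Plant nx nu ny nw nz) (γ : ℝ) :
    let Gplus : Set (GTuple nx nu ny) := {Z ∈ Gset P γ | 0 < Z.2.1.det}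
    let Gminus : Set (GTuple nx nu ny) := {Z ∈ Gset P γ | Z.2.1.det < 0}
    Disjoint Gplus Gminus ∧
    Gset P γ = Gplus ∪ Gminus ∧
    (∀ Z₁ ∈ Gplus, ∀ Z₂ ∈ Gminus, ¬ JoinedIn (Gset P γ) Z₁ Z₂) ∧
    ((Fset P γ).Nonempty →
      Gplus.Nonempty ∧ Gminus.Nonempty ∧ IsPathConnected Gplus ∧ IsPathConnected Gminus) := by
  intro Gplus Gminus
  have : Nonempty (Fin nx) := Fin.pos_iff_nonempty.1 hnx
  refine ⟨Set.disjoint_left.2 fun Z h₁ h₂ => h₁.2.not_gt h₂.2, ?_, ?_, fun hF => ?_⟩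
  · ext Z
    refine ⟨fun hZ => ?_, fun hZ => hZ.elim (·.1) (·.1)⟩
    exact (det_ne_zero_of_mem_Gset P γ hZ).lt_or_gt.symm.imp (⟨hZ, ·⟩) (⟨hZ, ·⟩)
  · intro Z₁ h₁ Z₂ h₂ hJ
    exact h₂.2.not_gt (hJ.pos_of_ne_zero (continuous_snd.fst.matrix_det)
      (fun Z hZ => det_ne_zero_of_mem_Gset P γ hZ) h₁.2).target_mem
  · have hplus : IsPathConnected Gplus :=
      isPathConnected_Gset_sep P γ hF isPathConnected_setOf_det_pos fun _ h => h.ne'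
    have hminus : IsPathConnected Gminus :=
      isPathConnected_Gset_sep P γ hF isPathConnected_setOf_det_neg fun _ h => h.ne
    exact ⟨hplus.nonempty, hminus.nonempty, hplus, hminus⟩

/-- For `γ > 0` and `n_x ≥ 1`, `G⁺ = {Z ∈ G_γ : det Π > 0}` and
`G⁻ = {Z ∈ G_γ : det Π < 0}` are disjoint with union `G_γ`, no point of `G⁺` can be joined
to a point of `G⁻` within `G_γ`, and if `F_γ ≠ ∅` then `G⁺, G⁻` are nonempty and
path-connected; so `G_γ` has exactly two path-connected components. -/
theorem Gset_two_components {nx nu ny nw nz : ℕ} (hnx : 1 ≤ nx) (hnu : 0 < nu) (hny : 0 < ny)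
    (hnw : 0 < nw) (hnz : 0 < nz) (P : Plant nx nu ny nw nz) (γ : ℝ) (hγ : 0 < γ) :
    let Gplus : Set (GTuple nx nu ny) := {Z ∈ Gset P γ | 0 < Z.2.1.det}
    let Gminus : Set (GTuple nx nu ny) := {Z ∈ Gset P γ | Z.2.1.det < 0}
    Disjoint Gplus Gminus ∧
    Gset P γ = Gplus ∪ Gminus ∧
    (∀ Z₁ ∈ Gplus, ∀ Z₂ ∈ Gminus, ¬ JoinedIn (Gset P γ) Z₁ Z₂) ∧
    ((Fset P γ).Nonempty →
      Gplus.Nonempty ∧ Gminus.Nonempty ∧ IsPathConnected Gplus ∧ IsPathConnected Gminus) :=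
  Gset_two_components_general hnx P γ
end
end

section
/- Let γ > 0. The map Ψ defined by Ψ((X,Y,Â,B̂,Ĉ,D̂), Π) := (X,Y,Â,B̂,Ĉ,D̂, Π, (I − YX)Π⁻¹) is a continuous bijection from F_γ × GL_{n_x}(ℝ) onto G_γ, where GL_{n_x}(ℝ) is the set of invertible real n_x×n_x matrices. -/
open Matrix

noncomputable section

/-- The map `Ψ((X,Y,Â,B̂,Ĉ,D̂), Π) = (X,Y,Â,B̂,Ĉ,D̂, Π, (I − YX)Π⁻¹)`. -/
def Psi {nx nu ny : ℕ} (p : FTuple nx nu ny × Matrix (Fin nx) (Fin nx) ℝ) :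
    GTuple nx nu ny :=
  (p.1, p.2, (1 - p.1.2.1 * p.1.1) * p.2⁻¹)

/-! Continuity and injectivity of `Ψ` are immediate; for surjectivity onto `G_γ` one needs `Π`
invertible whenever `ΞΠ = I − YX`. This holds because `I − YX` is invertible: swapping the block
columns of the positive definite matrix `[[X, I], [I, Y]]` gives `[[I, X], [Y, I]]`, whose
determinant is `det (I − YX)` by the Schur complement of the identity block. -/

namespace Matrix

variable {n R : Type*} [Fintype n] [DecidableEq n]

theorem isUnit_det_fromBlocks_one_one_iff [CommRing R] (A D : Matrix n n R) :
    IsUnit (fromBlocks A 1 1 D).det ↔ IsUnit (1 - D * A).det := by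
  have hswap : (fromBlocks A 1 1 D).submatrix id (Equiv.sumComm n n) = fromBlocks 1 A D 1 := by
    ext (i | i) (j | j) <;> rfl
  have hsign : IsUnit ((Equiv.Perm.sign (Equiv.sumComm n n) : ℤ) : R) :=
    (Equiv.Perm.sign _).isUnit.map (Int.castRingHom R)
  rw [← det_fromBlocks_one₁₁, ← hswap, det_permute', IsUnit.mul_iff]
  exact (and_iff_right hsign).symm

theorem PosDef.isUnit_det_one_sub_mul {K : Type*} [Field K] [PartialOrder K] [StarRing K]
    {X Y : Matrix n n K} (h : (fromBlocks X 1 1 Y).PosDef) : IsUnit (1 - Y * X).det :=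
  (isUnit_det_fromBlocks_one_one_iff X Y).1 ((isUnit_iff_isUnit_det _).1 h.isUnit)

end Matrix

section Psi

variable {nx nu ny : ℕ}

theorem Psi_injective : Function.Injective (Psi (nx := nx) (nu := nu) (ny := ny)) :=
  fun _ _ h => Prod.ext (congrArg (fun z : GTuple nx nu ny => z.1) h)
    (congrArg (fun z : GTuple nx nu ny => z.2.1) h)

theorem continuousOn_Psi :
    ContinuousOn (Psi (nx := nx) (nu := nu) (ny := ny)) {p | IsUnit p.2.det} := by
  intro p hp
  have hinv : ContinuousAt (·⁻¹) p.2 := by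
    refine continuousAt_matrix_inv _ ?_
    rw [Ring.inverse_eq_inv']
    exact continuousAt_inv₀ hp.ne_zero
  refine (continuous_fst.continuousAt.prodMk (continuous_snd.continuousAt.prodMk
    (ContinuousAt.mul ?_ (hinv.comp continuous_snd.continuousAt)))).continuousWithinAt
  fun_prop

theorem image_Psi_Fset_prod {nw nz : ℕ} (P : Plant nx nu ny nw nz) (γ : ℝ) :
    Psi '' (Fset P γ ×ˢ {T | IsUnit T.det}) = Gset P γ := by
  ext ⟨W, Pm, Ξ⟩
  constructor
  · rintro ⟨⟨W, Pm⟩, ⟨hW, hPm⟩, hΨ⟩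
    cases hΨ
    exact ⟨hW, by simp only [mul_assoc, nonsing_inv_mul _ hPm, mul_one]⟩
  · rintro ⟨hW, hΞPm⟩
    have hPm : IsUnit Pm.det := by
      have h := hW.2.2.1.isUnit_det_one_sub_mul
      rw [← hΞPm, det_mul] at h
      exact isUnit_of_mul_isUnit_right h
    refine ⟨(W, Pm), ⟨hW, hPm⟩, ?_⟩
    simp only [Psi, ← hΞPm, mul_assoc, mul_nonsing_inv _ hPm, mul_one]

end Psi

theorem Psi_continuous_bijection_general {nx nu ny nw nz : ℕ} (P : Plant nx nu ny nw nz)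
    (γ : ℝ) :
    let GLset : Set (Matrix (Fin nx) (Fin nx) ℝ) := {T | IsUnit T.det}
    let S : Set (FTuple nx nu ny × Matrix (Fin nx) (Fin nx) ℝ) := (Fset P γ) ×ˢ GLset
    ContinuousOn (Psi (nx := nx) (nu := nu) (ny := ny)) S ∧
    Set.InjOn (Psi (nx := nx) (nu := nu) (ny := ny)) S ∧
    Psi '' S = Gset P γ :=
  ⟨continuousOn_Psi.mono fun _ hp => hp.2, Psi_injective.injOn, image_Psi_Fset_prod P γ⟩

/-- For `γ > 0`, the map `Ψ` is a continuous bijection from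
`F_γ × GL_{n_x}(ℝ)` onto `G_γ`. -/
theorem Psi_continuous_bijection {nx nu ny nw nz : ℕ} (hnx : 0 < nx) (hnu : 0 < nu)
    (hny : 0 < ny) (hnw : 0 < nw) (hnz : 0 < nz) (P : Plant nx nu ny nw nz)
    (γ : ℝ) (hγ : 0 < γ) :
    let GLset : Set (Matrix (Fin nx) (Fin nx) ℝ) := {T | IsUnit T.det}
    let S : Set (FTuple nx nu ny × Matrix (Fin nx) (Fin nx) ℝ) := (Fset P γ) ×ˢ GLset
    ContinuousOn (Psi (nx := nx) (nu := nu) (ny := ny)) S ∧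
    Set.InjOn (Psi (nx := nx) (nu := nu) (ny := ny)) S ∧
    Psi '' S = Gset P γ :=
  Psi_continuous_bijection_general P γ
end
end

section
/- Let γ > 0 and define K⁺ := Φ(G⁺) and K⁻ := Φ(G⁻), where G⁺ = {Z ∈ G_γ : det Π > 0} and G⁻ = {Z ∈ G_γ : det Π < 0}. Then for every invertible T ∈ ℝ^{n_x×n_x} with det T < 0, 𝒯_T(K⁺) = K⁻ and 𝒯_{T⁻¹}(K⁻) = K⁺; in particular, 𝒯_T restricts to a bijection from K⁺ onto K⁻ whose inverse is the restriction of 𝒯_{T⁻¹}, and both restrictions are continuous (indeed infinitely differentiable), so K⁺ and K⁻ are diffeomorphic when K_γ is not path-connected. -/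
open Matrix

noncomputable section

attribute [local instance] Matrix.normedAddCommGroup Matrix.normedSpace

lemma simT_eq_mul {nx nu ny : ℕ} (T : Matrix (Fin nx) (Fin nx) ℝ)
    (K : Matrix (Fin nu ⊕ Fin nx) (Fin ny ⊕ Fin nx) ℝ) :
    simT T K = fromBlocks (1 : Matrix (Fin nu) (Fin nu) ℝ) 0 0 T * K *
      fromBlocks (1 : Matrix (Fin ny) (Fin ny) ℝ) 0 0 T⁻¹ := by
  obtain ⟨a, b, c, d, rfl⟩ : ∃ a b c d, K = fromBlocks a b c d :=
    ⟨_, _, _, _, (Matrix.fromBlocks_toBlocks K).symm⟩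
  simp [simT, Matrix.fromBlocks_multiply]

lemma simT_Phi {nx nu ny nw nz : ℕ} (P : Plant nx nu ny nw nz)
    (W : FTuple nx nu ny) (Pm Ξ T : Matrix (Fin nx) (Fin nx) ℝ) (hT : T.det ≠ 0) :
    simT T (Phi P (W, Pm, Ξ)) = Phi P (W, T * Pm, Ξ * T⁻¹) := by
  obtain ⟨X, Y, Ah, Bh, Ch, Dh⟩ := W
  have hU : IsUnit T.det := isUnit_iff_ne_zero.mpr hT
  have hTi : T * T⁻¹ = 1 := Matrix.mul_nonsing_inv T hU
  have hiT : T⁻¹ * T = 1 := Matrix.nonsing_inv_mul T hU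
  have hDu : (fromBlocks (1 : Matrix (Fin nu) (Fin nu) ℝ) 0 0 T⁻¹)⁻¹
      = fromBlocks 1 0 0 T := by
    apply Matrix.inv_eq_right_inv
    simp [Matrix.fromBlocks_multiply, hiT, Matrix.fromBlocks_one]
  have hDy : (fromBlocks (1 : Matrix (Fin ny) (Fin ny) ℝ) 0 0 T)⁻¹
      = fromBlocks 1 0 0 T⁻¹ := by
    apply Matrix.inv_eq_right_inv
    simp [Matrix.fromBlocks_multiply, hTi, Matrix.fromBlocks_one]
  have hL : fromBlocks (1 : Matrix (Fin nu) (Fin nu) ℝ) 0 (Y * P.B2) (Ξ * T⁻¹)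
      = fromBlocks 1 0 (Y * P.B2) Ξ * fromBlocks 1 0 0 T⁻¹ := by
    simp [Matrix.fromBlocks_multiply]
  have hR : fromBlocks (1 : Matrix (Fin ny) (Fin ny) ℝ) (P.C2 * X) 0 (T * Pm)
      = fromBlocks 1 0 0 T * fromBlocks 1 (P.C2 * X) 0 Pm := by
    simp [Matrix.fromBlocks_multiply]
  rw [simT_eq_mul]
  show _ * Phi P ((X, Y, Ah, Bh, Ch, Dh), Pm, Ξ) * _
      = Phi P ((X, Y, Ah, Bh, Ch, Dh), T * Pm, Ξ * T⁻¹)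
  simp only [Phi, hL, hR, Matrix.mul_inv_rev, hDu, hDy, Matrix.mul_assoc]

lemma simT_simT {nx nu ny : ℕ} (T : Matrix (Fin nx) (Fin nx) ℝ) (hT : T.det ≠ 0)
    (K : Matrix (Fin nu ⊕ Fin nx) (Fin ny ⊕ Fin nx) ℝ) :
    simT T⁻¹ (simT T K) = K := by
  obtain ⟨a, b, c, d, rfl⟩ : ∃ a b c d, K = fromBlocks a b c d :=
    ⟨_, _, _, _, (Matrix.fromBlocks_toBlocks K).symm⟩
  have hU : IsUnit T.det := isUnit_iff_ne_zero.mpr hT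
  have hiT : T⁻¹ * T = 1 := Matrix.nonsing_inv_mul T hU
  have e1 : b * T⁻¹ * T = b := by rw [Matrix.mul_assoc, hiT, Matrix.mul_one]
  have e2 : T⁻¹ * (T * c) = c := by rw [← Matrix.mul_assoc, hiT, Matrix.one_mul]
  have e3 : T⁻¹ * (T * d * T⁻¹) * T = d := by
    have h : T⁻¹ * (T * d * T⁻¹) * T = T⁻¹ * T * d * (T⁻¹ * T) := by noncomm_ring
    rw [h, hiT, Matrix.one_mul, Matrix.mul_one]
  simp [simT, Matrix.nonsing_inv_nonsing_inv T hU, e1, e2, e3]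

lemma simT_Phi_image {nx nu ny nw nz : ℕ} (P : Plant nx nu ny nw nz) (γ : ℝ)
    (T : Matrix (Fin nx) (Fin nx) ℝ) (hT : T.det ≠ 0) (q r : ℝ → Prop)
    (hqr : ∀ d, q d → r (T.det * d)) (hrq : ∀ d, r d → q (T.det⁻¹ * d)) :
    simT T '' (Phi P '' {Z ∈ Gset P γ | q Z.2.1.det}) =
      Phi P '' {Z ∈ Gset P γ | r Z.2.1.det} := by
  ext K
  constructor
  · rintro ⟨K', ⟨⟨W, Pm, Ξ⟩, ⟨hZG, hZq⟩, rfl⟩, rfl⟩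
    refine ⟨(W, T * Pm, Ξ * T⁻¹), ⟨⟨hZG.1, ?_⟩, ?_⟩, (simT_Phi P W Pm Ξ T hT).symm⟩
    · have h : Ξ * T⁻¹ * (T * Pm) = Ξ * Pm := by
        rw [Matrix.mul_assoc, ← Matrix.mul_assoc T⁻¹, Matrix.nonsing_inv_mul _ (isUnit_iff_ne_zero.mpr hT),
          Matrix.one_mul]
      exact h.trans hZG.2
    · show r (T * Pm).det
      rw [Matrix.det_mul]
      exact hqr _ hZq
  · rintro ⟨⟨W, Pm, Ξ⟩, ⟨hZG, hZr⟩, rfl⟩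
    have hPm : T * (T⁻¹ * Pm) = Pm := by
      rw [← Matrix.mul_assoc, Matrix.mul_nonsing_inv _ (isUnit_iff_ne_zero.mpr hT), Matrix.one_mul]
    have hXi : Ξ * T * T⁻¹ = Ξ := by
      rw [Matrix.mul_assoc, Matrix.mul_nonsing_inv _ (isUnit_iff_ne_zero.mpr hT), Matrix.mul_one]
    refine ⟨Phi P (W, T⁻¹ * Pm, Ξ * T), ⟨(W, T⁻¹ * Pm, Ξ * T), ⟨⟨hZG.1, ?_⟩, ?_⟩, rfl⟩, ?_⟩
    · have h : Ξ * T * (T⁻¹ * Pm) = Ξ * Pm := by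
        rw [Matrix.mul_assoc, ← Matrix.mul_assoc T, Matrix.mul_nonsing_inv _ (isUnit_iff_ne_zero.mpr hT),
          Matrix.one_mul]
      exact h.trans hZG.2
    · show q (T⁻¹ * Pm).det
      rw [Matrix.det_mul, Matrix.det_nonsing_inv, Ring.inverse_eq_inv']
      exact hrq _ hZr
    · rw [simT_Phi P W _ _ T hT, hPm, hXi]

lemma simT_contDiff {nx nu ny : ℕ} (T : Matrix (Fin nx) (Fin nx) ℝ) :
    ContDiff ℝ (⊤ : ℕ∞) (simT (nx := nx) (nu := nu) (ny := ny) T) := by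
  let l : Matrix (Fin nu ⊕ Fin nx) (Fin ny ⊕ Fin nx) ℝ →ₗ[ℝ]
      Matrix (Fin nu ⊕ Fin nx) (Fin ny ⊕ Fin nx) ℝ :=
    { toFun := fun K => fromBlocks (1 : Matrix (Fin nu) (Fin nu) ℝ) 0 0 T * K * fromBlocks (1 : Matrix (Fin ny) (Fin ny) ℝ) 0 0 T⁻¹
      map_add' := fun K L => by simp [Matrix.mul_add, Matrix.add_mul]
      map_smul' := fun c K => by simp [Matrix.mul_smul, Matrix.smul_mul] }
  have h : simT (nu := nu) (ny := ny) T = ⇑l := funext fun K => simT_eq_mul T K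
  rw [h]
  exact (LinearMap.toContinuousLinearMap l).contDiff

/-- With `K⁺ = Φ(G⁺)` and `K⁻ = Φ(G⁻)`, every similarity transformation
`𝒯_T` with `det T < 0` maps `K⁺` onto `K⁻` and `𝒯_{T⁻¹}` maps `K⁻` onto `K⁺`; these
restrictions are mutually inverse bijections and infinitely differentiable, so `K⁺` and `K⁻`
are diffeomorphic. -/
theorem Kplus_Kminus_diffeomorphic {nx nu ny nw nz : ℕ} (hnx : 0 < nx) (hnu : 0 < nu)
    (hny : 0 < ny) (hnw : 0 < nw) (hnz : 0 < nz) (P : Plant nx nu ny nw nz)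
    (γ : ℝ) (hγ : 0 < γ) :
    let Gplus : Set (GTuple nx nu ny) := {Z ∈ Gset P γ | 0 < Z.2.1.det}
    let Gminus : Set (GTuple nx nu ny) := {Z ∈ Gset P γ | Z.2.1.det < 0}
    let Kplus := Phi P '' Gplus
    let Kminus := Phi P '' Gminus
    ∀ T : Matrix (Fin nx) (Fin nx) ℝ, T.det < 0 →
      simT T '' Kplus = Kminus ∧
      simT T⁻¹ '' Kminus = Kplus ∧
      Set.BijOn (simT T) Kplus Kminus ∧
      Set.BijOn (simT T⁻¹) Kminus Kplus ∧
      (∀ K ∈ Kplus, simT T⁻¹ (simT T K) = K) ∧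
      (∀ K ∈ Kminus, simT T (simT T⁻¹ K) = K) ∧
      ContDiffOn ℝ (⊤ : ℕ∞) (simT (nu := nu) (ny := ny) T) Kplus ∧
      ContDiffOn ℝ (⊤ : ℕ∞) (simT (nu := nu) (ny := ny) T⁻¹) Kminus := by
  intro Gplus Gminus Kplus Kminus T hTdet
  have hT : T.det ≠ 0 := ne_of_lt hTdet
  have hTinvdet : T⁻¹.det < 0 := by
    rw [Matrix.det_nonsing_inv, Ring.inverse_eq_inv']
    exact inv_lt_zero.mpr hTdet
  have hT' : T⁻¹.det ≠ 0 := ne_of_lt hTinvdet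
  have h1 : simT T '' Kplus = Kminus := by
    exact simT_Phi_image P γ T hT (fun d => 0 < d) (fun d => d < 0)
      (fun d hd => mul_neg_of_neg_of_pos hTdet hd)
      (fun d hd => mul_pos_of_neg_of_neg (inv_lt_zero.mpr hTdet) hd)
  have h2 : simT T⁻¹ '' Kminus = Kplus := by
    exact simT_Phi_image P γ T⁻¹ hT' (fun d => d < 0) (fun d => 0 < d)
      (fun d hd => mul_pos_of_neg_of_neg hTinvdet hd)
      (fun d hd => mul_neg_of_neg_of_pos (inv_lt_zero.mpr hTinvdet) hd)
  have hinv1 : ∀ K : Matrix (Fin nu ⊕ Fin nx) (Fin ny ⊕ Fin nx) ℝ,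
      simT T⁻¹ (simT T K) = K := fun K => simT_simT T hT K
  have hinv2 : ∀ K : Matrix (Fin nu ⊕ Fin nx) (Fin ny ⊕ Fin nx) ℝ,
      simT T (simT T⁻¹ K) = K := by
    intro K
    have := simT_simT T⁻¹ hT' K
    rwa [Matrix.nonsing_inv_nonsing_inv T (isUnit_iff_ne_zero.mpr hT)] at this
  refine ⟨h1, h2, ⟨?_, ?_, ?_⟩, ⟨?_, ?_, ?_⟩, fun K _ => hinv1 K, fun K _ => hinv2 K,
    (simT_contDiff T).contDiffOn, (simT_contDiff T⁻¹).contDiffOn⟩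
  · exact fun K hK => h1 ▸ Set.mem_image_of_mem _ hK
  · exact fun a _ b _ hab => by rw [← hinv1 a, hab, hinv1 b]
  · exact h1.superset
  · exact fun K hK => h2 ▸ Set.mem_image_of_mem _ hK
  · exact fun a _ b _ hab => by rw [← hinv2 a, hab, hinv2 b]
  · exact h2.superset
end
end
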